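/- arXiv:1403.6714 — 8 statements merged into one kernel-verified Lean document; each statement's English description precedes it below -/
import Mathlib

section
/- Let N ≥ 1 and let H' and H'' be two distinct geometric hyperplanes of the binary Segre variety S_(N). Then the complement (in the point set of S_(N)) of the symmetric difference H' Δ H'' is again a geometric hyperplane of S_(N). -/
open scoped symmDiff

/-- A point of the binary Segre variety `S_(N)`. -/
abbrev SegrePoint (N : ℕ) := Fin N → Fin 3

/-- The line of `S_(N)` through `f` in direction `i`. -/
def segreLine {N : ℕ} (i : Fin N) (f : SegrePoint N) : Set (SegrePoint N) :=
  {x | ∀ j, j ≠ i → x j = f j}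

/-- A geometric hyperplane of `S_(N)`: a proper subset of the point set such that
every line either lies fully in it or meets it in exactly one point. -/
def IsGeomHyperplane {N : ℕ} (H : Set (SegrePoint N)) : Prop :=
  H ≠ Set.univ ∧ ∀ (i : Fin N) (f : SegrePoint N),
    segreLine i f ⊆ H ∨ (segreLine i f ∩ H).ncard = 1

/-- Two points of `S_(N)` are collinear iff they differ in exactly one coordinate. -/
def SegreCollinear {N : ℕ} (x y : SegrePoint N) : Prop :=
  hammingDist x y = 1

/-- An ovoid of `S_(N)`: a set of `3^(N-1)` pairwise non-collinear points. -/
def IsOvoid {N : ℕ} (O : Set (SegrePoint N)) : Prop :=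
  O.ncard = 3 ^ (N - 1) ∧ O.Pairwise fun x y => ¬ SegreCollinear x y

lemma mem_segreLine_iff {N : ℕ} (i : Fin N) (f x : SegrePoint N) :
    x ∈ segreLine i f ↔ x = Function.update f i (x i) := by
  constructor
  · intro h
    funext j
    by_cases hj : j = i
    · subst hj; simp
    · rw [Function.update_of_ne hj]; exact h j hj
  · intro h j hj
    rw [h]; exact Function.update_of_ne hj _ _

lemma update_mem_segreLine {N : ℕ} (i : Fin N) (f : SegrePoint N) (c : Fin 3) :
    Function.update f i c ∈ segreLine i f := by
  intro j hj; exact Function.update_of_ne hj _ _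

lemma fin3_third : ∀ u v : Fin 3, u ≠ v → ∃ w : Fin 3, w ≠ u ∧ w ≠ v ∧
    ∀ z : Fin 3, z ≠ u → z ≠ v → z = w := by decide

theorem veldkamp_sum_is_hyperplane :
    ∀ N : ℕ, 1 ≤ N → ∀ H' H'' : Set (SegrePoint N),
      IsGeomHyperplane H' → IsGeomHyperplane H'' → H' ≠ H'' →
      IsGeomHyperplane ((H' ∆ H'')ᶜ) := by
  intro N _ H' H'' h1 h2 hne
  constructor
  · intro hU
    apply hne
    have h0 : H' ∆ H'' = (∅ : Set (SegrePoint N)) := by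
      rw [← compl_compl (H' ∆ H''), hU, Set.compl_univ]
    exact symmDiff_eq_bot.mp h0
  · intro i f
    rcases h1.2 i f with hA | hA <;> rcases h2.2 i f with hB | hB
    · -- both full
      left
      intro x hx
      simp only [Set.mem_compl_iff, Set.mem_symmDiff]
      have := hA hx
      have := hB hx
      tauto
    · -- L ⊆ H', L ∩ H'' = {b}
      right
      obtain ⟨b, hb⟩ := Set.ncard_eq_one.mp hB
      have hbL : b ∈ segreLine i f ∧ b ∈ H'' := by
        have : b ∈ segreLine i f ∩ H'' := by rw [hb]; rfl
        exact this
      rw [Set.ncard_eq_one]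
      refine ⟨b, ?_⟩
      ext x
      simp only [Set.mem_inter_iff, Set.mem_compl_iff, Set.mem_symmDiff,
        Set.mem_singleton_iff]
      constructor
      · rintro ⟨hxL, hc⟩
        have hx' : x ∈ H' := hA hxL
        have hx'' : x ∈ H'' := by tauto
        have : x ∈ segreLine i f ∩ H'' := ⟨hxL, hx''⟩
        rw [hb] at this; exact this
      · rintro rfl
        exact ⟨hbL.1, by have := hA hbL.1; tauto⟩
    · -- L ∩ H' = {a}, L ⊆ H''
      right
      obtain ⟨a, ha⟩ := Set.ncard_eq_one.mp hA
      have haL : a ∈ segreLine i f ∧ a ∈ H' := by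
        have : a ∈ segreLine i f ∩ H' := by rw [ha]; rfl
        exact this
      rw [Set.ncard_eq_one]
      refine ⟨a, ?_⟩
      ext x
      simp only [Set.mem_inter_iff, Set.mem_compl_iff, Set.mem_symmDiff,
        Set.mem_singleton_iff]
      constructor
      · rintro ⟨hxL, hc⟩
        have hx'' : x ∈ H'' := hB hxL
        have hx' : x ∈ H' := by tauto
        have : x ∈ segreLine i f ∩ H' := ⟨hxL, hx'⟩
        rw [ha] at this; exact this
      · rintro rfl
        exact ⟨haL.1, by have := hB haL.1; tauto⟩
    · -- both singletons
      obtain ⟨a, ha⟩ := Set.ncard_eq_one.mp hA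
      obtain ⟨b, hb⟩ := Set.ncard_eq_one.mp hB
      have haL : a ∈ segreLine i f ∧ a ∈ H' := by
        have : a ∈ segreLine i f ∩ H' := by rw [ha]; rfl
        exact this
      have hbL : b ∈ segreLine i f ∧ b ∈ H'' := by
        have : b ∈ segreLine i f ∩ H'' := by rw [hb]; rfl
        exact this
      have haU : a = Function.update f i (a i) := (mem_segreLine_iff i f a).mp haL.1
      have hbU : b = Function.update f i (b i) := (mem_segreLine_iff i f b).mp hbL.1
      by_cases hab : a = b
      · -- same point: line fully in complement
        left
        intro x hxL
        simp only [Set.mem_compl_iff, Set.mem_symmDiff]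
        have h1' : x ∈ H' → x ∈ H'' := by
          intro hx
          have : x ∈ segreLine i f ∩ H' := ⟨hxL, hx⟩
          rw [ha] at this
          rw [this, hab]
          exact hbL.2
        have h2' : x ∈ H'' → x ∈ H' := by
          intro hx
          have : x ∈ segreLine i f ∩ H'' := ⟨hxL, hx⟩
          rw [hb] at this
          rw [this, ← hab]
          exact haL.2
        tauto
      · -- distinct points: third point is the unique intersection
        right
        have habi : a i ≠ b i := by
          intro h
          apply hab
          rw [haU, hbU, h]
        obtain ⟨c, hcu, hcv, hcz⟩ := fin3_third (a i) (b i) habi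
        set t := Function.update f i c with ht
        have htL : t ∈ segreLine i f := update_mem_segreLine i f c
        have hti : t i = c := by simp [ht]
        have hta : t ≠ a := by
          intro h
          apply hcu
          rw [← hti, h]
        have htb : t ≠ b := by
          intro h
          apply hcv
          rw [← hti, h]
        have htH' : t ∉ H' := by
          intro h
          have : t ∈ segreLine i f ∩ H' := ⟨htL, h⟩
          rw [ha] at this
          exact hta this
        have htH'' : t ∉ H'' := by
          intro h
          have : t ∈ segreLine i f ∩ H'' := ⟨htL, h⟩
          rw [hb] at this
          exact htb this
        rw [Set.ncard_eq_one]
        refine ⟨t, ?_⟩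
        ext x
        simp only [Set.mem_inter_iff, Set.mem_compl_iff, Set.mem_symmDiff,
          Set.mem_singleton_iff]
        constructor
        · rintro ⟨hxL, hc⟩
          have hxH' : x ∉ H' := by
            intro hx
            have hxa : x = a := by
              have : x ∈ segreLine i f ∩ H' := ⟨hxL, hx⟩
              rw [ha] at this; exact this
            have hxH'' : x ∈ H'' := by tauto
            have : x = b := by
              have : x ∈ segreLine i f ∩ H'' := ⟨hxL, hxH''⟩
              rw [hb] at this; exact this
            exact hab (hxa ▸ this ▸ rfl)
          have hxH'' : x ∉ H'' := by
            intro hx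
            have hxb : x = b := by
              have : x ∈ segreLine i f ∩ H'' := ⟨hxL, hx⟩
              rw [hb] at this; exact this
            have : x ∈ H' := by tauto
            exact hxH' this
          have hxU : x = Function.update f i (x i) := (mem_segreLine_iff i f x).mp hxL
          have hxa : x ≠ a := fun h => hxH' (h ▸ haL.2)
          have hxb : x ≠ b := fun h => hxH'' (h ▸ hbL.2)
          have hxia : x i ≠ a i := by
            intro h
            apply hxa
            rw [hxU, haU, h]
          have hxib : x i ≠ b i := by
            intro h
            apply hxb
            rw [hxU, hbU, h]
          have : x i = c := hcz _ hxia hxib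
          rw [hxU, this]
        · rintro rfl
          exact ⟨htL, by tauto⟩
end

section
/- The binary Segre variety S_(2) has exactly 15 geometric hyperplanes. -/
open scoped symmDiff

/-- Finset version of `segreLine`. -/
def lineFinset (i : Fin 2) (f : SegrePoint 2) : Finset (SegrePoint 2) :=
  Finset.univ.filter fun x => ∀ j, j ≠ i → x j = f j

/-- Decidable Finset version of `IsGeomHyperplane` for `N = 2`. -/
def Q (s : Finset (SegrePoint 2)) : Prop :=
  s ≠ Finset.univ ∧ ∀ (i : Fin 2) (f : SegrePoint 2),
    lineFinset i f ⊆ s ∨ (lineFinset i f ∩ s).card = 1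

instance : DecidablePred Q := fun s => by unfold Q; infer_instance

lemma lineFinset_coe (i : Fin 2) (f : SegrePoint 2) :
    (↑(lineFinset i f) : Set (SegrePoint 2)) = segreLine i f := by
  ext x; simp [lineFinset, segreLine]

lemma hyp_iff (s : Finset (SegrePoint 2)) : IsGeomHyperplane (↑s : Set (SegrePoint 2)) ↔ Q s := by
  unfold IsGeomHyperplane Q
  constructor
  · rintro ⟨h1, h2⟩
    refine ⟨fun h => h1 (by rw [h]; simp), fun i f => ?_⟩
    rcases h2 i f with h | h
    · left; intro x hx; have := h (by rw [← lineFinset_coe]; exact_mod_cast hx)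
      exact_mod_cast this
    · right
      rwa [← lineFinset_coe, ← Finset.coe_inter, Set.ncard_coe_finset] at h
  · rintro ⟨h1, h2⟩
    refine ⟨fun h => h1 (by simpa using Finset.coe_injective (by rw [h]; simp)), fun i f => ?_⟩
    rcases h2 i f with h | h
    · left; rw [← lineFinset_coe]; exact_mod_cast h
    · right; rw [← lineFinset_coe, ← Finset.coe_inter, Set.ncard_coe_finset]; exact h

theorem segre2_hyperplane_count :
    {H : Set (SegrePoint 2) | IsGeomHyperplane H}.ncard = 15 := by
  have himg : {H : Set (SegrePoint 2) | IsGeomHyperplane H} =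
      (fun s : Finset (SegrePoint 2) => (↑s : Set (SegrePoint 2))) '' {s | Q s} := by
    ext H
    constructor
    · intro hH
      refine ⟨(Set.toFinite H).toFinset, ?_, by simp⟩
      rw [Set.mem_setOf_eq, ← hyp_iff]
      simpa using hH
    · rintro ⟨s, hs, rfl⟩
      exact (hyp_iff s).2 hs
  rw [himg, Set.ncard_image_of_injective _ Finset.coe_injective,
    Set.ncard_eq_toFinset_card', Set.toFinset_setOf]
  decide
end

section
/- There exists a bijection φ from the set of geometric hyperplanes of the binary Segre variety S_(2) onto the set of nonzero vectors of the vector space (ZMod 2)^4 such that for any two distinct geometric hyperplanes H' and H'' of S_(2), φ of the complement of the symmetric difference H' Δ H'' equals φ(H') + φ(H''). (That is, the ordinary Veldkamp space of S_(2) is isomorphic to PG(3,2).) -/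
open scoped symmDiff

-- auxiliary machinery
def uvec : Fin 3 → Fin 2 → ZMod 2 := ![![1,0],![0,1],![1,1]]

def emb (q : SegrePoint 2) : Fin 4 → ZMod 2 :=
  ![uvec (q 0) 0 * uvec (q 1) 0, uvec (q 0) 0 * uvec (q 1) 1,
    uvec (q 0) 1 * uvec (q 1) 0, uvec (q 0) 1 * uvec (q 1) 1]

def pbase : Fin 4 → SegrePoint 2 := ![![0,0],![0,1],![1,0],![1,1]]

def ip (w : Fin 4 → ZMod 2) (q : SegrePoint 2) : ZMod 2 :=
  w 0 * emb q 0 + w 1 * emb q 1 + w 2 * emb q 2 + w 3 * emb q 3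

open Classical in
noncomputable def chi (H : Set (SegrePoint 2)) (q : SegrePoint 2) : ZMod 2 :=
  if q ∈ H then 0 else 1

lemma mem_line_iff (i : Fin 2) (f x : SegrePoint 2) :
    x ∈ segreLine i f ↔
      (x = Function.update f i 0 ∨ x = Function.update f i 1 ∨ x = Function.update f i 2) := by
  show (∀ j, j ≠ i → x j = f j) ↔ _
  revert i f x; decide

lemma upd_mem_line (i : Fin 2) (f : SegrePoint 2) (c : Fin 3) :
    Function.update f i c ∈ segreLine i f := by
  intro j hj; exact Function.update_of_ne hj c f

lemma upd_ne (i : Fin 2) (f : SegrePoint 2) {c c' : Fin 3} (h : c ≠ c') :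
    Function.update f i c ≠ Function.update f i c' := by
  intro he
  have := congrFun he i
  simp [Function.update_self] at this
  exact h this

set_option maxRecDepth 10000 in
lemma key_ext' : ∀ m : Fin 3 → Fin 3 → ZMod 2,
    (∀ (i : Fin 2) (f : SegrePoint 2),
      m (Function.update f i 2 0) (Function.update f i 2 1)
        = m (Function.update f i 0 0) (Function.update f i 0 1)
          + m (Function.update f i 1 0) (Function.update f i 1 1)) →
    ∀ q : SegrePoint 2, m (q 0) (q 1) = ip (fun k => m (pbase k 0) (pbase k 1)) q := by
  decide

lemma vec_eta (q : SegrePoint 2) : ![q 0, q 1] = q := by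
  funext j; fin_cases j <;> rfl

lemma key_ext (g : SegrePoint 2 → ZMod 2)
    (h : ∀ (i : Fin 2) (f : SegrePoint 2),
      g (Function.update f i 2) = g (Function.update f i 0) + g (Function.update f i 1)) :
    ∀ q, g q = ip (fun k => g (pbase k)) q := by
  have key := key_ext' (fun a b => g ![a, b]) (by
    intro i f
    simpa only [vec_eta] using h i f)
  intro q
  simpa only [vec_eta] using key q

lemma ip_pbase : ∀ (w : Fin 4 → ZMod 2) (k : Fin 4), ip w (pbase k) = w k := by decide

lemma ip_add : ∀ (w : Fin 4 → ZMod 2) (i : Fin 2) (f : SegrePoint 2),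
    ip w (Function.update f i 2) = ip w (Function.update f i 0) + ip w (Function.update f i 1) := by
  decide

lemma chi_eq_zero_iff (H : Set (SegrePoint 2)) (q : SegrePoint 2) :
    chi H q = 0 ↔ q ∈ H := by
  unfold chi
  split
  · simpa
  · simp_all

lemma chi_add {H : Set (SegrePoint 2)} (hH : IsGeomHyperplane H) (i : Fin 2) (f : SegrePoint 2) :
    chi H (Function.update f i 2) = chi H (Function.update f i 0) + chi H (Function.update f i 1) := by
  rcases hH.2 i f with h | h
  · have h0 := h (upd_mem_line i f 0)
    have h1 := h (upd_mem_line i f 1)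
    have h2 := h (upd_mem_line i f 2)
    simp [chi, h0, h1, h2]
  · obtain ⟨a, ha⟩ := Set.ncard_eq_one.mp h
    have hha : a ∈ segreLine i f ∩ H := by rw [ha]; exact Set.mem_singleton a
    have hmem : ∀ c : Fin 3, (Function.update f i c ∈ H ↔ Function.update f i c = a) := by
      intro c
      constructor
      · intro hc
        have : Function.update f i c ∈ segreLine i f ∩ H := ⟨upd_mem_line i f c, hc⟩
        rwa [ha] at this
      · intro hc
        exact hc ▸ hha.2
    have key : ∀ c : Fin 3, chi H (Function.update f i c)
        = if Function.update f i c = a then 0 else 1 := by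
      intro c
      by_cases hc : Function.update f i c = a
      · rw [if_pos hc]
        unfold chi
        rw [if_pos ((hmem c).mpr hc)]
      · rw [if_neg hc]
        unfold chi
        rw [if_neg (fun hm => hc ((hmem c).mp hm))]
    rcases (mem_line_iff i f a).mp hha.1 with h' | h' | h' <;> subst h' <;>
        rw [key 0, key 1, key 2]
    · rw [if_pos rfl, if_neg (upd_ne i f (show (1:Fin 3) ≠ 0 by decide)),
        if_neg (upd_ne i f (show (2:Fin 3) ≠ 0 by decide))]
      decide
    · rw [if_neg (upd_ne i f (show (0:Fin 3) ≠ 1 by decide)), if_pos rfl,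
        if_neg (upd_ne i f (show (2:Fin 3) ≠ 1 by decide))]
      decide
    · rw [if_neg (upd_ne i f (show (0:Fin 3) ≠ 2 by decide)),
        if_neg (upd_ne i f (show (1:Fin 3) ≠ 2 by decide)), if_pos rfl]
      decide

lemma mem_iff_ip {H : Set (SegrePoint 2)} (hH : IsGeomHyperplane H) (q : SegrePoint 2) :
    q ∈ H ↔ ip (fun k => chi H (pbase k)) q = 0 := by
  rw [← key_ext (chi H) (fun i f => chi_add hH i f) q, chi_eq_zero_iff]

lemma zmod2_cases : ∀ a : ZMod 2, a = 0 ∨ a = 1 := by decide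

lemma inter_singleton (w : Fin 4 → ZMod 2) (i : Fin 2) (f : SegrePoint 2) (c0 : Fin 3)
    (h : ∀ c : Fin 3, ip w (Function.update f i c) = 0 ↔ c = c0) :
    segreLine i f ∩ {q | ip w q = 0} = {Function.update f i c0} := by
  ext x
  constructor
  · rintro ⟨hx1, hx2⟩
    rcases (mem_line_iff i f x).mp hx1 with h' | h' | h' <;> subst h' <;>
      exact Set.mem_singleton_iff.mpr (by rw [(h _).mp hx2])
  · rintro rfl
    exact ⟨upd_mem_line i f c0, (h c0).mpr rfl⟩

theorem segre2_veldkamp_space_is_PG32 :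
    ∃ φ : Set (SegrePoint 2) → (Fin 4 → ZMod 2),
      Set.BijOn φ {H : Set (SegrePoint 2) | IsGeomHyperplane H}
        {v : Fin 4 → ZMod 2 | v ≠ 0} ∧
      ∀ H' H'' : Set (SegrePoint 2),
        IsGeomHyperplane H' → IsGeomHyperplane H'' → H' ≠ H'' →
        φ ((H' ∆ H'')ᶜ) = φ H' + φ H'' := by

  refine ⟨fun H k => chi H (pbase k), ⟨⟨?_, ?_, ?_⟩, ?_⟩⟩
  · -- MapsTo
    intro H hH
    simp only [Set.mem_setOf_eq] at hH ⊢
    intro h0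
    apply hH.1
    rw [Set.eq_univ_iff_forall]
    intro q
    rw [mem_iff_ip hH q, h0]
    show ip 0 q = 0
    revert q; decide
  · -- InjOn
    intro H' h1 H'' h2 heq
    simp only [Set.mem_setOf_eq] at h1 h2
    have heq' : (fun k => chi H' (pbase k)) = (fun k => chi H'' (pbase k)) := heq
    ext q
    rw [mem_iff_ip h1 q, mem_iff_ip h2 q, heq']
  · -- SurjOn
    intro w hw
    simp only [Set.mem_setOf_eq] at hw
    refine ⟨{q | ip w q = 0}, ?_, ?_⟩
    · -- hyperplane
      simp only [Set.mem_setOf_eq]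
      constructor
      · obtain ⟨k, hk⟩ := Function.ne_iff.mp hw
        intro h
        apply hk
        have : pbase k ∈ {q | ip w q = 0} := h ▸ Set.mem_univ _
        rw [← ip_pbase w k]
        exact this
      · intro i f
        have hadd := ip_add w i f
        rcases zmod2_cases (ip w (Function.update f i 0)) with ha | ha <;>
          rcases zmod2_cases (ip w (Function.update f i 1)) with hb | hb
        · left
          intro x hx
          rcases (mem_line_iff i f x).mp hx with h' | h' | h' <;> subst h'
          · exact ha
          · exact hb
          · show ip w _ = 0; rw [hadd, ha, hb]; decide
        · right
          rw [inter_singleton w i f 0 ?_, Set.ncard_singleton]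
          intro c; fin_cases c <;> simp [ha, hb, hadd] <;> decide
        · right
          rw [inter_singleton w i f 1 ?_, Set.ncard_singleton]
          intro c; fin_cases c <;> simp [ha, hb, hadd] <;> decide
        · right
          rw [inter_singleton w i f 2 ?_, Set.ncard_singleton]
          intro c; fin_cases c <;> simp [ha, hb, hadd] <;> decide
    · -- φ Hw = w
      funext k
      show chi {q | ip w q = 0} (pbase k) = w k
      by_cases h : ip w (pbase k) = 0
      · unfold chi
        rw [if_pos (show pbase k ∈ {q | ip w q = 0} from h), ← ip_pbase w k, h]
      · unfold chi
        rw [if_neg (show pbase k ∉ {q | ip w q = 0} from h), ← ip_pbase w k]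
        rcases zmod2_cases (ip w (pbase k)) with h' | h'
        · exact absurd h' h
        · exact h'.symm
  · -- additivity
    intro H' H'' _ _ _
    funext k
    show chi ((H' ∆ H'')ᶜ) (pbase k) = chi H' (pbase k) + chi H'' (pbase k)
    have hc : pbase k ∈ (H' ∆ H'')ᶜ ↔ (pbase k ∈ H' ↔ pbase k ∈ H'') := by
      rw [Set.mem_compl_iff, Set.mem_symmDiff]
      tauto
    unfold chi
    by_cases h1 : pbase k ∈ H' <;> by_cases h2 : pbase k ∈ H''
    · rw [if_pos (hc.mpr (iff_of_true h1 h2)), if_pos h1, if_pos h2]; decide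
    · rw [if_neg (fun hmm => h2 ((hc.mp hmm).mp h1)), if_pos h1, if_neg h2]; decide
    · rw [if_neg (fun hmm => h1 ((hc.mp hmm).mpr h2)), if_neg h1, if_pos h2]; decide
    · rw [if_pos (hc.mpr (iff_of_false h1 h2)), if_neg h1, if_neg h2]; decide
end

section
/- The binary Segre variety S_(3) has exactly 255 geometric hyperplanes. -/
set_option maxRecDepth 100000
set_option maxHeartbeats 1000000

open scoped symmDiff

/-! ### Auxiliary development -/

/-- Basis of the even-weight code in `𝔽₂³`. -/
def ee : Fin 2 → Fin 3 → Bool := ![![true,false,true], ![false,true,true]]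

/-- The codeword of the tensor code attached to an 8-bit tensor `t`. -/
def vt (t : Fin 2 → Fin 2 → Fin 2 → Bool) (x : SegrePoint 3) : Bool :=
  xor (t 0 0 0 && ee 0 (x 0) && ee 0 (x 1) && ee 0 (x 2))
  (xor (t 0 0 1 && ee 0 (x 0) && ee 0 (x 1) && ee 1 (x 2))
  (xor (t 0 1 0 && ee 0 (x 0) && ee 1 (x 1) && ee 0 (x 2))
  (xor (t 0 1 1 && ee 0 (x 0) && ee 1 (x 1) && ee 1 (x 2))
  (xor (t 1 0 0 && ee 1 (x 0) && ee 0 (x 1) && ee 0 (x 2))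
  (xor (t 1 0 1 && ee 1 (x 0) && ee 0 (x 1) && ee 1 (x 2))
  (xor (t 1 1 0 && ee 1 (x 0) && ee 1 (x 1) && ee 0 (x 2))
       (t 1 1 1 && ee 1 (x 0) && ee 1 (x 1) && ee 1 (x 2))))))))

lemma tv_lemma : ∀ (t : Fin 2 → Fin 2 → Fin 2 → Bool) (a b c : Fin 2),
    vt t ![![(0:Fin 3),1] a, ![(0:Fin 3),1] b, ![(0:Fin 3),1] c] = t a b c := by decide

lemma vt_parity_raw : ∀ (t : Fin 2 → Fin 2 → Fin 2 → Bool) (u v : Fin 3),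
    (xor (vt t ![0,u,v]) (xor (vt t ![1,u,v]) (vt t ![2,u,v])) = false) ∧
    (xor (vt t ![u,0,v]) (xor (vt t ![u,1,v]) (vt t ![u,2,v])) = false) ∧
    (xor (vt t ![u,v,0]) (xor (vt t ![u,v,1]) (vt t ![u,v,2])) = false) := by decide

lemma vt_parity (t : Fin 2 → Fin 2 → Fin 2 → Bool) (i : Fin 3) (f : SegrePoint 3) :
    xor (vt t (Function.update f i 0))
      (xor (vt t (Function.update f i 1)) (vt t (Function.update f i 2))) = false := by
  fin_cases i
  · have h : ∀ c : Fin 3, Function.update f (0 : Fin 3) c = ![c, f 1, f 2] := by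
      intro c; funext j; fin_cases j <;> simp [Function.update]
    simp only [h]; exact (vt_parity_raw t (f 1) (f 2)).1
  · have h : ∀ c : Fin 3, Function.update f (1 : Fin 3) c = ![f 0, c, f 2] := by
      intro c; funext j; fin_cases j <;> simp [Function.update]
    simp only [h]; exact (vt_parity_raw t (f 0) (f 2)).2.1
  · have h : ∀ c : Fin 3, Function.update f (2 : Fin 3) c = ![f 0, f 1, c] := by
      intro c; funext j; fin_cases j <;> simp [Function.update]
    simp only [h]; exact (vt_parity_raw t (f 0) (f 1)).2.2

/-- A function satisfying the line-parity condition is determined by its values on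
points whose coordinates all lie in `{0,1}`. -/
lemma parity_ext (v w : SegrePoint 3 → Bool)
    (hv : ∀ (i : Fin 3) (f : SegrePoint 3),
      xor (v (Function.update f i 0))
        (xor (v (Function.update f i 1)) (v (Function.update f i 2))) = false)
    (hw : ∀ (i : Fin 3) (f : SegrePoint 3),
      xor (w (Function.update f i 0))
        (xor (w (Function.update f i 1)) (w (Function.update f i 2))) = false)
    (h01 : ∀ x : SegrePoint 3, (∀ j, x j ≠ 2) → v x = w x) : v = w := by
  classical
  have key : ∀ (n : ℕ) (x : SegrePoint 3),
      (Finset.univ.filter fun j => x j = 2).card ≤ n → v x = w x := by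
    intro n
    induction n with
    | zero =>
      intro x hx
      apply h01
      intro j hj
      have : j ∈ Finset.univ.filter fun j => x j = 2 := by
        simp [Finset.mem_filter, hj]
      have h0 : (Finset.univ.filter fun j => x j = 2) = ∅ :=
        Finset.card_eq_zero.1 (Nat.le_zero.1 hx)
      simp [h0] at this
    | succ n ih =>
      intro x hx
      by_cases h2 : ∀ j, x j ≠ 2
      · exact h01 x h2
      · push_neg at h2
        obtain ⟨i, hi⟩ := h2
        have hx2 : Function.update x i 2 = x := by rw [← hi, Function.update_eq_self]
        have hv' := hv i x; have hw' := hw i x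
        rw [hx2] at hv' hw'
        have e3 : ∀ a b c : Bool, xor a (xor b c) = false → c = xor a b := by decide
        rw [e3 _ _ _ hv', e3 _ _ _ hw']
        have hc : ∀ c : Fin 3, c ≠ 2 →
            (Finset.univ.filter fun j => Function.update x i c j = 2).card ≤ n := by
          intro c hc2
          have hsub : (Finset.univ.filter fun j => Function.update x i c j = 2) ⊆
              (Finset.univ.filter fun j => x j = 2).erase i := by
            intro j hj
            simp only [Finset.mem_filter, Finset.mem_univ, true_and] at hj
            by_cases hji : j = i
            · subst hji; rw [Function.update_self] at hj; exact absurd hj hc2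
            · rw [Function.update_of_ne hji] at hj
              simp [Finset.mem_erase, Finset.mem_filter, hji, hj]
          have hin : i ∈ Finset.univ.filter fun j => x j = 2 := by
            simp [Finset.mem_filter, hi]
          have h1 := Finset.card_le_card hsub
          rw [Finset.card_erase_of_mem hin] at h1
          omega
        rw [ih _ (hc 0 (by decide)), ih _ (hc 1 (by decide))]
  funext x
  exact key _ x le_rfl

lemma line_eq_range (i : Fin 3) (f : SegrePoint 3) :
    segreLine i f = Set.range (fun c => Function.update f i c) := by
  ext x
  constructor
  · intro hx
    refine ⟨x i, ?_⟩
    funext j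
    by_cases hj : j = i
    · subst hj; simp
    · show Function.update f i (x i) j = x j
      rw [Function.update_of_ne hj]; exact (hx j hj).symm
  · rintro ⟨c, rfl⟩
    intro j hj
    show Function.update f i c j = f j
    rw [Function.update_of_ne hj]

lemma update_inj (i : Fin 3) (f : SegrePoint 3) :
    Function.Injective (fun c : Fin 3 => Function.update f i c) := by
  intro c d h
  have := congrFun h i
  simpa using this

lemma finset3 : ∀ s : Finset (Fin 3), (s = Finset.univ ∨ s.card = 1) ↔
    ((0 ∈ s) ↔ ((1 ∈ s) ↔ (2 ∈ s))) := by decide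

/-- The hyperplane condition on a single line, expressed propositionally. -/
lemma cond_iff (H : Set (SegrePoint 3)) (i : Fin 3) (f : SegrePoint 3) :
    (segreLine i f ⊆ H ∨ (segreLine i f ∩ H).ncard = 1) ↔
    ((Function.update f i 0 ∈ H) ↔
      ((Function.update f i 1 ∈ H) ↔ (Function.update f i 2 ∈ H))) := by
  classical
  set p := fun c : Fin 3 => Function.update f i c with hp
  have hpi := update_inj i f
  have hL : segreLine i f = Set.range p := line_eq_range i f
  set T : Set (Fin 3) := p ⁻¹' H with hT
  have hTf : T.Finite := Set.toFinite T
  have h1 : segreLine i f ∩ H = p '' T := by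
    rw [hL, hT, Set.image_preimage_eq_inter_range, Set.inter_comm]
  have h2 : (segreLine i f ∩ H).ncard = T.ncard := by
    rw [h1, Set.ncard_image_of_injective _ hpi]
  have h3 : segreLine i f ⊆ H ↔ T = Set.univ := by
    rw [hL, Set.range_subset_iff, Set.eq_univ_iff_forall]
    exact Iff.rfl
  have hcard : T.ncard = hTf.toFinset.card := Set.ncard_eq_toFinset_card T hTf
  have huniv : T = Set.univ ↔ hTf.toFinset = Finset.univ := by
    rw [Set.Finite.toFinset_eq_univ]
  rw [h2, h3, hcard, huniv, finset3]
  simp [Set.Finite.mem_toFinset, hT, hp]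

/-- The candidate hyperplane attached to a tensor `t`. -/
def Hset (t : Fin 2 → Fin 2 → Fin 2 → Bool) : Set (SegrePoint 3) :=
  {x | vt t x = false}

lemma vt_zero (x : SegrePoint 3) : vt (fun _ _ _ => false) x = false := by
  simp [vt]

lemma hyp_iff_s7 (H : Set (SegrePoint 3)) :
    IsGeomHyperplane H ↔ ∃ t, t ≠ (fun _ _ _ => false) ∧ H = Hset t := by
  classical
  constructor
  · rintro ⟨hne, hlines⟩
    set v : SegrePoint 3 → Bool := fun x => decide (x ∉ H) with hv
    have hvmem : ∀ x, v x = false ↔ x ∈ H := by intro x; simp [hv]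
    have hpar : ∀ (i : Fin 3) (f : SegrePoint 3),
        xor (v (Function.update f i 0))
          (xor (v (Function.update f i 1)) (v (Function.update f i 2))) = false := by
      intro i f
      have h := (cond_iff H i f).1 (hlines i f)
      by_cases h0 : Function.update f i 0 ∈ H <;>
        by_cases h1 : Function.update f i 1 ∈ H <;>
        by_cases h2 : Function.update f i 2 ∈ H <;>
        simp_all [hv]
    set t : Fin 2 → Fin 2 → Fin 2 → Bool :=
      fun a b c => v ![![(0:Fin 3),1] a, ![(0:Fin 3),1] b, ![(0:Fin 3),1] c] with ht
    have hemb : ∀ u : Fin 3, u ≠ 2 → ∃ a : Fin 2, ![(0:Fin 3),1] a = u := by decide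
    have hvt : vt t = v := by
      apply parity_ext (vt t) v (vt_parity t) hpar
      intro x hx
      obtain ⟨a, ha⟩ := hemb (x 0) (hx 0)
      obtain ⟨b, hb⟩ := hemb (x 1) (hx 1)
      obtain ⟨c, hc⟩ := hemb (x 2) (hx 2)
      have hxe : x = ![![(0:Fin 3),1] a, ![(0:Fin 3),1] b, ![(0:Fin 3),1] c] := by
        funext j; fin_cases j <;> simp [ha, hb, hc]
      rw [hxe, tv_lemma, ht]
    refine ⟨t, ?_, ?_⟩
    · intro h0
      apply hne
      have hvz : v = fun _ => false := by
        rw [← hvt, h0]; funext x; exact vt_zero x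
      ext x
      simp only [Set.mem_univ, iff_true]
      rw [← hvmem x, hvz]
    · ext x
      simp only [Hset, Set.mem_setOf_eq, hvt]
      exact (hvmem x).symm
  · rintro ⟨t, ht0, rfl⟩
    constructor
    · intro heq
      have : ∃ a b c, t a b c ≠ false := by
        by_contra h
        push_neg at h
        exact ht0 (funext fun a => funext fun b => funext fun c => h a b c)
      obtain ⟨a, b, c, habc⟩ := this
      have hx : (![![(0:Fin 3),1] a, ![(0:Fin 3),1] b, ![(0:Fin 3),1] c] : SegrePoint 3)
          ∈ Hset t := heq ▸ Set.mem_univ _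
      simp only [Hset, Set.mem_setOf_eq, tv_lemma] at hx
      exact habc hx
    · intro i f
      rw [cond_iff]
      have hpar := vt_parity t i f
      have key : ∀ x y z : Bool, xor x (xor y z) = false →
          ((x = false) ↔ ((y = false) ↔ (z = false))) := by decide
      simpa [Hset] using key _ _ _ hpar

lemma Hset_inj : Function.Injective Hset := by
  intro t1 t2 h
  have hv : ∀ x, vt t1 x = vt t2 x := by
    intro x
    have : (vt t1 x = false) ↔ (vt t2 x = false) := by
      constructor <;> intro hx
      · have : x ∈ Hset t2 := h ▸ hx
        exact this
      · have : x ∈ Hset t1 := h ▸ hx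
        exact this
    cases h1 : vt t1 x <;> cases h2 : vt t2 x <;> simp_all
  funext a b c
  rw [← tv_lemma t1 a b c, ← tv_lemma t2 a b c, hv]

theorem segre3_hyperplane_count :
    {H : Set (SegrePoint 3) | IsGeomHyperplane H}.ncard = 255 := by
  classical
  have hset : {H : Set (SegrePoint 3) | IsGeomHyperplane H} =
      Hset '' {t | t ≠ (fun _ _ _ => false)} := by
    ext H
    simp only [Set.mem_setOf_eq, Set.mem_image, hyp_iff_s7]
    constructor
    · rintro ⟨t, ht, rfl⟩; exact ⟨t, ht, rfl⟩
    · rintro ⟨t, ht, rfl⟩; exact ⟨t, ht, rfl⟩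
  rw [hset, Set.ncard_image_of_injective _ Hset_inj]
  have : {t : Fin 2 → Fin 2 → Fin 2 → Bool | t ≠ (fun _ _ _ => false)} =
      ({(fun _ _ _ => false)}ᶜ : Set (Fin 2 → Fin 2 → Fin 2 → Bool)) := by
    ext t; simp
  rw [this, Set.ncard_eq_toFinset_card']
  simp only [Set.toFinset_compl, Set.toFinset_singleton, Finset.card_compl,
    Finset.card_singleton]
  have hcard : Fintype.card (Fin 2 → Fin 2 → Fin 2 → Bool) = 256 := by
    simp [Fintype.card_fun]
  rw [hcard]
end

section
/- Every geometric hyperplane of the binary Segre variety S_(3) has exactly 19, 15, 13, 11, or 9 points. -/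
open scoped symmDiff

/-! ### Auxiliary machinery -/

lemma segreLine_eq {N : ℕ} (i : Fin N) (f : SegrePoint N) :
    segreLine i f = {Function.update f i 0, Function.update f i 1, Function.update f i 2} := by
  ext x
  constructor
  · intro hx
    have hx2 : x = Function.update f i (x i) := by
      funext j
      by_cases hj : j = i
      · subst hj; simp
      · rw [Function.update_of_ne hj]; exact hx j hj
    have h3 : ∀ a : Fin 3, a = 0 ∨ a = 1 ∨ a = 2 := by decide
    rcases h3 (x i) with h | h | h <;> rw [h] at hx2 <;> simp [hx2]
  · intro hx j hj
    rcases hx with rfl | rfl | rfl <;> exact Function.update_of_ne hj _ _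

lemma line_parity {α : Type*} {H : Set α} {a b c : α} (hab : a ≠ b) (hac : a ≠ c) (hbc : b ≠ c)
    (h : ({a,b,c} : Set α) ⊆ H ∨ (({a,b,c} : Set α) ∩ H).ncard = 1) :
    (c ∈ H ↔ (a ∈ H ↔ b ∈ H)) := by
  rcases h with h | h
  · have ha := h (by simp : a ∈ ({a,b,c} : Set α))
    have hb := h (by simp : b ∈ ({a,b,c} : Set α))
    have hc := h (by simp : c ∈ ({a,b,c} : Set α))
    simp [ha, hb, hc]
  · rw [Set.ncard_eq_one] at h
    obtain ⟨x, hx⟩ := h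
    have hxmem : x ∈ ({a,b,c} : Set α) ∩ H := by rw [hx]; simp
    have ha' : a ∈ H ↔ a = x := by
      constructor
      · intro h'
        have : a ∈ ({a,b,c} : Set α) ∩ H := ⟨by simp, h'⟩
        rw [hx] at this; simpa using this
      · rintro rfl; exact hxmem.2
    have hb' : b ∈ H ↔ b = x := by
      constructor
      · intro h'
        have : b ∈ ({a,b,c} : Set α) ∩ H := ⟨by simp, h'⟩
        rw [hx] at this; simpa using this
      · rintro rfl; exact hxmem.2
    have hc' : c ∈ H ↔ c = x := by
      constructor
      · intro h'
        have : c ∈ ({a,b,c} : Set α) ∩ H := ⟨by simp, h'⟩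
        rw [hx] at this; simpa using this
      · rintro rfl; exact hxmem.2
    have hxabc : x = a ∨ x = b ∨ x = c := by
      have := hxmem.1; simpa using this
    rcases hxabc with rfl | rfl | rfl <;>
      simp [ha', hb', hc', hab, hac, hbc, hab.symm, hac.symm, hbc.symm]

def ext3 (g : Fin 2 → Bool) : Fin 3 → Bool := ![g 0, g 1, g 0 == g 1]

def Bfun (b : Fin 2 → Fin 2 → Fin 2 → Bool) (x y z : Fin 3) : Bool :=
  ext3 (fun u => ext3 (fun v => ext3 (fun w => b u v w) z) y) x

lemma ext3_spec (g : Fin 3 → Bool) (hg : g 2 = (g 0 == g 1)) (t : Fin 3) :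
    g t = ext3 (fun u => g u.castSucc) t := by
  fin_cases t <;> simp [ext3, hg]

lemma Bfun_eq (m : Fin 3 → Fin 3 → Fin 3 → Bool)
    (R0 : ∀ y z, m 2 y z = (m 0 y z == m 1 y z))
    (R1 : ∀ x z, m x 2 z = (m x 0 z == m x 1 z))
    (R2 : ∀ x y, m x y 2 = (m x y 0 == m x y 1)) (x y z : Fin 3) :
    m x y z = Bfun (fun u v w => m u.castSucc v.castSucc w.castSucc) x y z := by
  rw [ext3_spec (fun x => m x y z) (R0 y z) x]
  unfold Bfun
  congr 1
  funext u
  rw [ext3_spec (fun y => m u.castSucc y z) (R1 _ z) y]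
  congr 1
  funext v
  exact ext3_spec (fun z => m u.castSucc v.castSucc z) (R2 _ _) z

set_option maxRecDepth 10000 in
lemma key_card : ∀ b : Fin 2 → Fin 2 → Fin 2 → Bool,
    (Finset.univ.filter fun p : Fin 3 → Fin 3 => Bfun b (p 0) (p 1) (p 2)).card = 27 ∨
    (Finset.univ.filter fun p : Fin 3 → Fin 3 => Bfun b (p 0) (p 1) (p 2)).card = 19 ∨
    (Finset.univ.filter fun p : Fin 3 → Fin 3 => Bfun b (p 0) (p 1) (p 2)).card = 15 ∨
    (Finset.univ.filter fun p : Fin 3 → Fin 3 => Bfun b (p 0) (p 1) (p 2)).card = 13 ∨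
    (Finset.univ.filter fun p : Fin 3 → Fin 3 => Bfun b (p 0) (p 1) (p 2)).card = 11 ∨
    (Finset.univ.filter fun p : Fin 3 → Fin 3 => Bfun b (p 0) (p 1) (p 2)).card = 9 := by
  decide

theorem segre3_hyperplane_sizes :
    ∀ H : Set (SegrePoint 3), IsGeomHyperplane H →
      H.ncard = 19 ∨ H.ncard = 15 ∨ H.ncard = 13 ∨ H.ncard = 11 ∨ H.ncard = 9 := by
  intro H hH
  classical
  -- update computations
  have upd0 : ∀ (y z k : Fin 3),
      Function.update (![(0:Fin 3), y, z]) 0 k = ![k, y, z] := by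
    intro y z k; funext j; fin_cases j <;> simp [Function.update]
  have upd1 : ∀ (x z k : Fin 3),
      Function.update (![x, (0:Fin 3), z]) 1 k = ![x, k, z] := by
    intro x z k; funext j; fin_cases j <;> simp [Function.update]
  have upd2 : ∀ (x y k : Fin 3),
      Function.update (![x, y, (0:Fin 3)]) 2 k = ![x, y, k] := by
    intro x y k; funext j; fin_cases j <;> simp [Function.update]
  -- parity relations
  have R0 : ∀ y z : Fin 3,
      (decide ((![2, y, z] : SegrePoint 3) ∈ H) : Bool)
        = (decide ((![0, y, z] : SegrePoint 3) ∈ H) == decide ((![1, y, z] : SegrePoint 3) ∈ H)) := by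
    intro y z
    have hline := hH.2 0 ![0, y, z]
    rw [segreLine_eq] at hline
    simp only [upd0] at hline
    have h01 : (![(0:Fin 3), y, z] : SegrePoint 3) ≠ ![1, y, z] := by
      intro h; have := congrFun h 0; simp at this
    have h02 : (![(0:Fin 3), y, z] : SegrePoint 3) ≠ ![2, y, z] := by
      intro h; have := congrFun h 0; simp at this
    have h12 : (![(1:Fin 3), y, z] : SegrePoint 3) ≠ ![2, y, z] := by
      intro h; have := congrFun h 0; simp at this
    have hp := line_parity h01 h02 h12 hline
    by_cases h0 : (![0, y, z] : SegrePoint 3) ∈ H <;>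
      by_cases h1 : (![1, y, z] : SegrePoint 3) ∈ H <;>
      simp [hp, h0, h1]
  have R1 : ∀ x z : Fin 3,
      (decide ((![x, 2, z] : SegrePoint 3) ∈ H) : Bool)
        = (decide ((![x, 0, z] : SegrePoint 3) ∈ H) == decide ((![x, 1, z] : SegrePoint 3) ∈ H)) := by
    intro x z
    have hline := hH.2 1 ![x, 0, z]
    rw [segreLine_eq] at hline
    simp only [upd1] at hline
    have h01 : (![x, (0:Fin 3), z] : SegrePoint 3) ≠ ![x, 1, z] := by
      intro h; have := congrFun h 1; simp at this
    have h02 : (![x, (0:Fin 3), z] : SegrePoint 3) ≠ ![x, 2, z] := by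
      intro h; have := congrFun h 1; simp at this
    have h12 : (![x, (1:Fin 3), z] : SegrePoint 3) ≠ ![x, 2, z] := by
      intro h; have := congrFun h 1; simp at this
    have hp := line_parity h01 h02 h12 hline
    by_cases h0 : (![x, 0, z] : SegrePoint 3) ∈ H <;>
      by_cases h1 : (![x, 1, z] : SegrePoint 3) ∈ H <;>
      simp [hp, h0, h1]
  have R2 : ∀ x y : Fin 3,
      (decide ((![x, y, 2] : SegrePoint 3) ∈ H) : Bool)
        = (decide ((![x, y, 0] : SegrePoint 3) ∈ H) == decide ((![x, y, 1] : SegrePoint 3) ∈ H)) := by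
    intro x y
    have hline := hH.2 2 ![x, y, 0]
    rw [segreLine_eq] at hline
    simp only [upd2] at hline
    have h01 : (![x, y, (0:Fin 3)] : SegrePoint 3) ≠ ![x, y, 1] := by
      intro h; have := congrFun h 2; simp at this
    have h02 : (![x, y, (0:Fin 3)] : SegrePoint 3) ≠ ![x, y, 2] := by
      intro h; have := congrFun h 2; simp at this
    have h12 : (![x, y, (1:Fin 3)] : SegrePoint 3) ≠ ![x, y, 2] := by
      intro h; have := congrFun h 2; simp at this
    have hp := line_parity h01 h02 h12 hline
    by_cases h0 : (![x, y, 0] : SegrePoint 3) ∈ H <;>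
      by_cases h1 : (![x, y, 1] : SegrePoint 3) ∈ H <;>
      simp [hp, h0, h1]
  have hb := Bfun_eq (fun x y z : Fin 3 => decide ((![x, y, z] : SegrePoint 3) ∈ H)) R0 R1 R2
  set b : Fin 2 → Fin 2 → Fin 2 → Bool :=
    fun u v w => decide ((![u.castSucc, v.castSucc, w.castSucc] : SegrePoint 3) ∈ H) with hbdef
  have hpt : ∀ p : SegrePoint 3, (![p 0, p 1, p 2] : SegrePoint 3) = p := by
    intro p; funext j; fin_cases j <;> rfl
  have hHF : H = ↑(Finset.univ.filter fun p : SegrePoint 3 => Bfun b (p 0) (p 1) (p 2)) := by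
    ext p
    simp only [Finset.coe_filter, Finset.mem_univ, true_and, Set.mem_setOf_eq]
    rw [← hb (p 0) (p 1) (p 2)]
    simp [hpt p]
  rcases key_card b with h | h
  · exfalso
    apply hH.1
    have huniv : (Finset.univ.filter fun p : SegrePoint 3 => Bfun b (p 0) (p 1) (p 2))
        = Finset.univ := Finset.eq_univ_of_card _ (by rw [h]; decide)
    rw [hHF, huniv, Finset.coe_univ]
  · rw [hHF, Set.ncard_coe_finset]
    exact h
end

section
/- For every point p of the binary Segre variety S_(3), the set of points at Hamming distance at most 2 from p is a geometric hyperplane of S_(3) with exactly 19 points which contains exactly 15 full lines of S_(3); moreover, every geometric hyperplane of S_(3) with exactly 19 points arises in this way from a unique point p. -/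
open scoped symmDiff

set_option maxRecDepth 100000

namespace Seg3

/-! ### Basic lemmas about lines -/

lemma mem_segreLine_iff {N : ℕ} {i : Fin N} {f x : SegrePoint N} :
    x ∈ segreLine i f ↔ x = Function.update f i (x i) := by
  constructor
  · intro hx
    funext j
    by_cases hj : j = i
    · subst hj; rw [Function.update_self]
    · rw [Function.update_of_ne hj]; exact hx j hj
  · intro he j hj
    conv_lhs => rw [he]
    rw [Function.update_of_ne hj]

lemma segreLine_eq_range {N : ℕ} (i : Fin N) (f : SegrePoint N) :
    segreLine i f = Set.range (Function.update f i) := by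
  ext x
  rw [mem_segreLine_iff]
  constructor
  · intro h; exact ⟨x i, h.symm⟩
  · rintro ⟨t, rfl⟩
    rw [Function.update_self]

lemma line_subset_iff {N : ℕ} (i : Fin N) (f : SegrePoint N) (A : Set (SegrePoint N)) :
    segreLine i f ⊆ A ↔ ∀ t, Function.update f i t ∈ A := by
  rw [segreLine_eq_range]
  constructor
  · intro h t; exact h ⟨t, rfl⟩
  · rintro h x ⟨t, rfl⟩; exact h t

lemma ncard_setOf {α : Type*} [Fintype α] (P : α → Prop) [DecidablePred P] :
    {x | P x}.ncard = (Finset.univ.filter P).card := by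
  rw [← Set.ncard_coe_finset]
  congr 1
  ext x
  simp

lemma line_inter {N : ℕ} (i : Fin N) (f : SegrePoint N) (A : Set (SegrePoint N)) :
    segreLine i f ∩ A = (Function.update f i) '' {t | Function.update f i t ∈ A} := by
  rw [Set.inter_comm, segreLine_eq_range, ← Set.image_preimage_eq_inter_range]
  rfl

lemma line_inter_ncard {N : ℕ} (i : Fin N) (f : SegrePoint N) (A : Set (SegrePoint N))
    [DecidablePred fun t => Function.update f i t ∈ A] :
    (segreLine i f ∩ A).ncard =
      (Finset.univ.filter fun t => Function.update f i t ∈ A).card := by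
  rw [line_inter, Set.ncard_image_of_injective _ (Function.update_injective f i),
    ncard_setOf]

lemma segreLine_update {N : ℕ} (i : Fin N) (f : SegrePoint N) (t : Fin 3) :
    segreLine i (Function.update f i t) = segreLine i f := by
  ext x
  simp only [segreLine, Set.mem_setOf_eq]
  constructor <;> intro hx j hj
  · have := hx j hj; rwa [Function.update_of_ne hj] at this
  · rw [Function.update_of_ne hj]; exact hx j hj

/-! ### Counting functions and decidable lemmas -/

def c1 (f : Fin 3 → Bool) : ℕ :=
  (if f 0 then 1 else 0) + (if f 1 then 1 else 0) + (if f 2 then 1 else 0)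

def t2c (m : Fin 3 → Fin 3 → Bool) : ℕ := c1 (m 0) + c1 (m 1) + c1 (m 2)

def t3c (h : Fin 3 → Fin 3 → Fin 3 → Bool) : ℕ := t2c (h 0) + t2c (h 1) + t2c (h 2)

theorem layerLemma : ∀ m : Fin 3 → Fin 3 → Bool,
    (∀ c, c1 (fun b => m b c) = 0 ∨ c1 (fun b => m b c) = 2) →
    (∀ b, c1 (m b) = 0 ∨ c1 (m b) = 2) →
    t2c m = 0 ∨ t2c m = 6 ∨ (t2c m = 4 ∧ ∃ q r, ∀ b c,
      m b c = (decide (b ≠ q) && decide (c ≠ r))) := by decide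

theorem zeroLemma : ∀ m : Fin 3 → Fin 3 → Bool, t2c m = 0 → ∀ b c, m b c = false := by decide

theorem cnt1Lemma : ∀ (f : Fin 3 → Bool) (a0 a1 a2 : Fin 3), a0 ≠ a1 → a0 ≠ a2 → a1 ≠ a2 →
    f a0 = false → f a1 = true → f a2 = false → c1 f = 1 := by decide

theorem exC : ∀ r1 r2 : Fin 3, ∃ c : Fin 3, c ≠ r1 ∧ c ≠ r2 := by decide

theorem casesLemma : ∀ a a0 a1 a2 : Fin 3, a0 ≠ a1 → a0 ≠ a2 → a1 ≠ a2 →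
    a = a0 ∨ a = a1 ∨ a = a2 := by decide

theorem c1filter : ∀ f : Fin 3 → Bool,
    (Finset.univ.filter (fun t => f t = true)).card = c1 f := by decide

theorem uniqLemma : ∀ p p' : Fin 3 → Fin 3,
    (∀ a b c : Fin 3, (a ≠ p 0 ∧ b ≠ p 1 ∧ c ≠ p 2) ↔ (a ≠ p' 0 ∧ b ≠ p' 1 ∧ c ≠ p' 2)) →
    p = p' := by decide

theorem updateVec0 : ∀ (x b c t : Fin 3),
    Function.update ![x, b, c] 0 t = ![t, b, c] := by decide

theorem updateVec1 : ∀ (a x c t : Fin 3),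
    Function.update ![a, x, c] 1 t = ![a, t, c] := by decide

theorem updateVec2 : ∀ (a b x t : Fin 3),
    Function.update ![a, b, x] 2 t = ![a, b, t] := by decide

theorem distIff : ∀ x p : Fin 3 → Fin 3, hammingDist x p ≤ 2 ↔ ∃ i, x i = p i := by decide

theorem ballProper : ∀ p : Fin 3 → Fin 3, ¬ hammingDist (fun i => p i + 1) p ≤ 2 := by decide

theorem ballLine : ∀ (p f : Fin 3 → Fin 3) (i : Fin 3),
    (∀ t : Fin 3, hammingDist (Function.update f i t) p ≤ 2) ∨
    (Finset.univ.filter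
      (fun t : Fin 3 => hammingDist (Function.update f i t) p ≤ 2)).card = 1 := by decide

theorem ball19 : ∀ p : Fin 3 → Fin 3,
    (Finset.univ.filter fun x : Fin 3 → Fin 3 => hammingDist x p ≤ 2).card = 19 := by decide

theorem ball15 : ∀ p : Fin 3 → Fin 3,
    (Finset.univ.filter (fun q : Fin 3 × (Fin 3 → Fin 3) =>
      q.2 q.1 = 0 ∧ ∀ t : Fin 3, hammingDist (Function.update q.2 q.1 t) p ≤ 2)).card
      = 15 := by decide

/-! ### The classification of 8-point complements -/

lemma eta3 (x : Fin 3 → Fin 3) : x = ![x 0, x 1, x 2] := by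
  funext i; fin_cases i <;> rfl

def e3 : (Fin 3 → Fin 3) ≃ Fin 3 × Fin 3 × Fin 3 where
  toFun x := (x 0, x 1, x 2)
  invFun y := ![y.1, y.2.1, y.2.2]
  left_inv x := (eta3 x).symm
  right_inv := by rintro ⟨a, b, c⟩; rfl

lemma card_filter_eq_t3 (g : (Fin 3 → Fin 3) → Bool) :
    (Finset.univ.filter (fun x => g x = true)).card = t3c (fun a b c => g ![a, b, c]) := by
  rw [Finset.card_filter]
  rw [Fintype.sum_equiv e3 _
    (fun y : Fin 3 × Fin 3 × Fin 3 => if g ![y.1, y.2.1, y.2.2] then 1 else 0)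
    (fun x => by
      simp only [e3, Equiv.coe_fn_mk]
      simp [show g ![x 0, x 1, x 2] = g x from congrArg g (eta3 x).symm])]
  rw [Fintype.sum_prod_type]
  simp only [Fintype.sum_prod_type, Fin.sum_univ_three]
  simp [t3c, t2c, c1]

theorem glue (h : Fin 3 → Fin 3 → Fin 3 → Bool) (a0 a1 a2 : Fin 3)
    (d01 : a0 ≠ a1) (d02 : a0 ≠ a2) (d12 : a1 ≠ a2)
    (L0 : ∀ b c, c1 (fun a => h a b c) = 0 ∨ c1 (fun a => h a b c) = 2)
    (h0 : t2c (h a0) = 0)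
    (hg1 : ∃ q r, ∀ b c, h a1 b c = (decide (b ≠ q) && decide (c ≠ r)))
    (hg2 : ∃ q r, ∀ b c, h a2 b c = (decide (b ≠ q) && decide (c ≠ r))) :
    ∃! p : Fin 3 → Fin 3, ∀ a b c, (h a b c = true ↔ (a ≠ p 0 ∧ b ≠ p 1 ∧ c ≠ p 2)) := by
  obtain ⟨q1, r1, hq1⟩ := hg1
  obtain ⟨q2, r2, hq2⟩ := hg2
  have hz : ∀ b c, h a0 b c = false := zeroLemma _ h0
  have hqq : q1 = q2 := by
    by_contra hne
    obtain ⟨c, hc1, hc2⟩ := exC r1 r2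
    have e1 : h a1 q2 c = true := by rw [hq1]; simp [Ne.symm hne, hc1]
    have e2 : h a2 q2 c = false := by rw [hq2]; simp
    have := cnt1Lemma (fun a => h a q2 c) a0 a1 a2 d01 d02 d12 (hz _ _) e1 e2
    rcases L0 q2 c with h' | h' <;> omega
  have hrr : r1 = r2 := by
    by_contra hne
    obtain ⟨b, hb1, hb2⟩ := exC q1 q2
    have e1 : h a1 b r2 = true := by rw [hq1]; simp [hb1, Ne.symm hne]
    have e2 : h a2 b r2 = false := by rw [hq2]; simp
    have := cnt1Lemma (fun a => h a b r2) a0 a1 a2 d01 d02 d12 (hz _ _) e1 e2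
    rcases L0 b r2 with h' | h' <;> omega
  subst hqq hrr
  have hchar : ∀ a b c, (h a b c = true ↔
      (a ≠ (![a0, q1, r1] : Fin 3 → Fin 3) 0 ∧ b ≠ (![a0, q1, r1] : Fin 3 → Fin 3) 1 ∧
        c ≠ (![a0, q1, r1] : Fin 3 → Fin 3) 2)) := by
    intro a b c
    rcases casesLemma a a0 a1 a2 d01 d02 d12 with rfl | rfl | rfl
    · simp [hz]
    · rw [hq1]; simp [Ne.symm d01]
    · rw [hq2]; simp [Ne.symm d02]
  refine ⟨![a0, q1, r1], hchar, ?_⟩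
  intro p' hp'
  exact uniqLemma p' ![a0, q1, r1] (fun a b c => ((hp' a b c).symm.trans (hchar a b c)))

theorem comb (h : Fin 3 → Fin 3 → Fin 3 → Bool)
    (htot : t3c h = 8)
    (L0 : ∀ b c, c1 (fun a => h a b c) = 0 ∨ c1 (fun a => h a b c) = 2)
    (L1 : ∀ a c, c1 (fun b => h a b c) = 0 ∨ c1 (fun b => h a b c) = 2)
    (L2 : ∀ a b, c1 (h a b) = 0 ∨ c1 (h a b) = 2) :
    ∃! p : Fin 3 → Fin 3, ∀ a b c, (h a b c = true ↔ (a ≠ p 0 ∧ b ≠ p 1 ∧ c ≠ p 2)) := by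
  have ht : t2c (h 0) + t2c (h 1) + t2c (h 2) = 8 := htot
  have C0 := layerLemma (h 0) (fun c => L1 0 c) (fun b => L2 0 b)
  have C1 := layerLemma (h 1) (fun c => L1 1 c) (fun b => L2 1 b)
  have C2 := layerLemma (h 2) (fun c => L1 2 c) (fun b => L2 2 b)
  rcases C0 with e0 | e0 | ⟨e0, g0⟩ <;> rcases C1 with e1 | e1 | ⟨e1, g1⟩ <;>
    rcases C2 with e2 | e2 | ⟨e2, g2⟩ <;>
    first
    | exact glue h 0 1 2 (by decide) (by decide) (by decide) L0 e0 g1 g2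
    | exact glue h 1 0 2 (by decide) (by decide) (by decide) L0 e1 g0 g2
    | exact glue h 2 0 1 (by decide) (by decide) (by decide) L0 e2 g0 g1
    | omega

lemma forall_fin3 (P : Fin 3 → Prop) : (∀ i, P i) ↔ P 0 ∧ P 1 ∧ P 2 := by
  constructor
  · intro H; exact ⟨H 0, H 1, H 2⟩
  · rintro ⟨h0, h1, h2⟩ i; fin_cases i <;> assumption

theorem classify (C : Set (SegrePoint 3)) (h8 : C.ncard = 8)
    (hline : ∀ (i : Fin 3) (f : SegrePoint 3),
      (segreLine i f ∩ C).ncard = 0 ∨ (segreLine i f ∩ C).ncard = 2) :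
    ∃! p : SegrePoint 3, ∀ x, x ∈ C ↔ ∀ i, x i ≠ p i := by
  classical
  set g : SegrePoint 3 → Bool := fun x => decide (x ∈ C) with hgdef
  have hmem : ∀ x, x ∈ C ↔ g x = true := fun x => by simp [hgdef]
  set h : Fin 3 → Fin 3 → Fin 3 → Bool := fun a b c => g ![a, b, c] with hhdef
  have hline' : ∀ (i : Fin 3) (f : SegrePoint 3),
      (Finset.univ.filter fun t => g (Function.update f i t) = true).card = 0 ∨
      (Finset.univ.filter fun t => g (Function.update f i t) = true).card = 2 := by
    intro i f
    have hfe : (Finset.univ.filter fun t => Function.update f i t ∈ C) =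
        (Finset.univ.filter fun t => g (Function.update f i t) = true) :=
      Finset.filter_congr (fun t _ => by rw [hmem])
    rcases hline i f with h' | h' <;> rw [line_inter_ncard, hfe] at h'
    · left; exact h'
    · right; exact h'
  have L0 : ∀ b c, c1 (fun a => h a b c) = 0 ∨ c1 (fun a => h a b c) = 2 := by
    intro b c
    have := hline' 0 ![0, b, c]
    rw [show (Finset.univ.filter fun t => g (Function.update ![(0 : Fin 3), b, c] 0 t) = true) =
        (Finset.univ.filter fun t => (fun a => h a b c) t = true) from
      Finset.filter_congr (fun t _ => by rw [updateVec0]), c1filter] at this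
    exact this
  have L1 : ∀ a c, c1 (fun b => h a b c) = 0 ∨ c1 (fun b => h a b c) = 2 := by
    intro a c
    have := hline' 1 ![a, 0, c]
    rw [show (Finset.univ.filter fun t => g (Function.update ![a, (0 : Fin 3), c] 1 t) = true) =
        (Finset.univ.filter fun t => (fun b => h a b c) t = true) from
      Finset.filter_congr (fun t _ => by rw [updateVec1]), c1filter] at this
    exact this
  have L2 : ∀ a b, c1 (h a b) = 0 ∨ c1 (h a b) = 2 := by
    intro a b
    have := hline' 2 ![a, b, 0]
    rw [show (Finset.univ.filter fun t => g (Function.update ![a, b, (0 : Fin 3)] 2 t) = true) =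
        (Finset.univ.filter fun t => (h a b) t = true) from
      Finset.filter_congr (fun t _ => by rw [updateVec2]), c1filter] at this
    exact this
  have htot : t3c h = 8 := by
    have hCs : C = {x | g x = true} := Set.ext fun x => hmem x
    rw [hCs, ncard_setOf, card_filter_eq_t3] at h8
    exact h8
  have key : ∀ p : SegrePoint 3,
      (∀ a b c, (h a b c = true ↔ (a ≠ p 0 ∧ b ≠ p 1 ∧ c ≠ p 2))) ↔
      (∀ x, x ∈ C ↔ ∀ i, x i ≠ p i) := by
    intro p
    constructor
    · intro hp x
      rw [hmem x, show g x = h (x 0) (x 1) (x 2) from congrArg g (eta3 x), hp,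
        forall_fin3 (fun i => x i ≠ p i)]
    · intro hp a b c
      have := hp ![a, b, c]
      rw [hmem, forall_fin3 (fun i => (![a, b, c] : Fin 3 → Fin 3) i ≠ p i)] at this
      exact this
  obtain ⟨p, hp, hu⟩ := comb h htot L0 L1 L2
  exact ⟨p, (key p).mp hp, fun y hy => hu y ((key y).mpr hy)⟩

lemma ball_iff_char (H : Set (SegrePoint 3)) (p : SegrePoint 3) :
    H = {x | hammingDist x p ≤ 2} ↔ ∀ x, x ∈ Hᶜ ↔ ∀ i, x i ≠ p i := by
  constructor
  · rintro rfl x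
    simp only [Set.mem_compl_iff, Set.mem_setOf_eq, distIff, not_exists]
  · intro hc
    ext x
    have hx := hc x
    simp only [Set.mem_compl_iff] at hx
    simp only [Set.mem_setOf_eq, distIff x p]
    constructor
    · intro hxH
      by_contra hno
      push_neg at hno
      exact (hx.mpr hno) hxH
    · rintro ⟨i, hi⟩
      by_contra hxH
      exact (hx.mp hxH) i hi

lemma lineParamInjOn :
    Set.InjOn (fun q : Fin 3 × SegrePoint 3 => segreLine q.1 q.2)
      {q : Fin 3 × SegrePoint 3 | q.2 q.1 = 0} := by
  rintro ⟨i, f⟩ h1 ⟨i', f'⟩ h2 heq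
  simp only [Set.mem_setOf_eq] at h1 h2 heq
  have hmem : ∀ t : Fin 3, Function.update f i t ∈ segreLine i f := by
    intro t j hj
    rw [Function.update_of_ne hj]
  have hii : i = i' := by
    by_contra hne
    have m0 := heq ▸ hmem 0
    have m1 := heq ▸ hmem 1
    have e0 : (0 : Fin 3) = f' i := by
      have := m0 i hne
      rwa [Function.update_self] at this
    have e1 : (1 : Fin 3) = f' i := by
      have := m1 i hne
      rwa [Function.update_self] at this
    exact absurd (e0.trans e1.symm) (by decide)
  subst hii
  have hself : f ∈ segreLine i f := fun j _ => rfl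
  rw [heq] at hself
  have hff : f = f' := by
    funext j
    by_cases hj : j = i
    · subst hj; rw [h1, h2]
    · exact hself j hj
  rw [hff]

end Seg3

open Seg3 in
theorem segre3_singular_hyperplanes :
    (∀ p : SegrePoint 3,
      IsGeomHyperplane {x : SegrePoint 3 | hammingDist x p ≤ 2} ∧
      {x : SegrePoint 3 | hammingDist x p ≤ 2}.ncard = 19 ∧
      {L : Set (SegrePoint 3) |
        (∃ (i : Fin 3) (f : SegrePoint 3), L = segreLine i f) ∧
        L ⊆ {x : SegrePoint 3 | hammingDist x p ≤ 2}}.ncard = 15) ∧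
    (∀ H : Set (SegrePoint 3), IsGeomHyperplane H → H.ncard = 19 →
      ∃! p : SegrePoint 3, H = {x : SegrePoint 3 | hammingDist x p ≤ 2}) := by
  constructor
  · intro p
    refine ⟨⟨?_, ?_⟩, ?_, ?_⟩
    · -- proper
      intro hU
      exact ballProper p (Set.eq_univ_iff_forall.mp hU (fun i => p i + 1))
    · -- lines
      intro i f
      rcases ballLine p f i with h' | h'
      · left
        exact (line_subset_iff i f _).mpr (fun t => h' t)
      · right
        rw [line_inter_ncard]
        exact h'
    · -- 19 points
      rw [ncard_setOf]
      exact ball19 p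
    · -- 15 lines
      have him : {L : Set (SegrePoint 3) |
          (∃ (i : Fin 3) (f : SegrePoint 3), L = segreLine i f) ∧
          L ⊆ {x : SegrePoint 3 | hammingDist x p ≤ 2}} =
          (fun q : Fin 3 × SegrePoint 3 => segreLine q.1 q.2) ''
          {q : Fin 3 × SegrePoint 3 | q.2 q.1 = 0 ∧
            segreLine q.1 q.2 ⊆ {x : SegrePoint 3 | hammingDist x p ≤ 2}} := by
        ext L
        constructor
        · rintro ⟨⟨i, f, rfl⟩, hsub⟩
          refine ⟨(i, Function.update f i 0), ⟨Function.update_self i 0 f, ?_⟩, ?_⟩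
          · simp only
            rw [segreLine_update]
            exact hsub
          · simp only
            rw [segreLine_update]
        · rintro ⟨⟨i, f⟩, ⟨h0, hsub⟩, rfl⟩
          exact ⟨⟨i, f, rfl⟩, hsub⟩
      rw [him, Set.ncard_image_of_injOn (lineParamInjOn.mono (fun q hq => hq.1))]
      have hset : {q : Fin 3 × SegrePoint 3 | q.2 q.1 = 0 ∧
          segreLine q.1 q.2 ⊆ {x : SegrePoint 3 | hammingDist x p ≤ 2}} =
          {q : Fin 3 × SegrePoint 3 | q.2 q.1 = 0 ∧
            ∀ t : Fin 3, hammingDist (Function.update q.2 q.1 t) p ≤ 2} := by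
        ext q
        exact and_congr_right fun _ => line_subset_iff q.1 q.2 _
      rw [hset, ncard_setOf]
      exact ball15 p
  · -- classification
    intro H hH h19
    classical
    have hcard27 : Nat.card (SegrePoint 3) = 27 := by
      simp [Nat.card_eq_fintype_card]
    have hcompl : Hᶜ.ncard = 8 := by
      have := Set.ncard_add_ncard_compl H
      rw [hcard27] at this
      omega
    have hlines : ∀ (i : Fin 3) (f : SegrePoint 3),
        (segreLine i f ∩ Hᶜ).ncard = 0 ∨ (segreLine i f ∩ Hᶜ).ncard = 2 := by
      intro i f
      rcases hH.2 i f with hsub | hone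
      · left
        have hempty : segreLine i f ∩ Hᶜ = ∅ :=
          Set.eq_empty_iff_forall_notMem.mpr fun x ⟨hx, hxc⟩ => hxc (hsub hx)
        rw [hempty, Set.ncard_empty]
      · right
        rw [line_inter_ncard] at hone ⊢
        have hfe : (Finset.univ.filter fun t => Function.update f i t ∈ Hᶜ) =
            (Finset.univ.filter fun t => ¬(Function.update f i t ∈ H)) :=
          Finset.filter_congr (fun t _ => Iff.rfl)
        have hsplit := Finset.card_filter_add_card_filter_not
          (s := (Finset.univ : Finset (Fin 3)))
          (p := fun t => Function.update f i t ∈ H)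
        simp only [Finset.card_univ, Fintype.card_fin] at hsplit
        rw [hfe]
        omega
    obtain ⟨p, hp, hu⟩ := classify Hᶜ hcompl hlines
    exact ⟨p, (ball_iff_char H p).mpr hp, fun y hy => hu y ((ball_iff_char H y).mp hy)⟩
end

section
/- For every point p of the binary Segre variety S_(4), the set of points at Hamming distance at most 3 from p is a geometric hyperplane of S_(4) with exactly 65 points; moreover, S_(4) has exactly 81 geometric hyperplanes with 65 points, and each of them arises in this way from a unique point p. -/
open scoped symmDiff

namespace SegreAux

/-- Finset version of a line. -/
def lineF {N : ℕ} (i : Fin N) (f : SegrePoint N) : Finset (SegrePoint N) :=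
  Finset.univ.filter fun x => ∀ j, j ≠ i → x j = f j

lemma mem_lineF {N : ℕ} {i : Fin N} {f x : SegrePoint N} :
    x ∈ lineF i f ↔ ∀ j, j ≠ i → x j = f j := by
  simp [lineF]

lemma coe_lineF {N : ℕ} (i : Fin N) (f : SegrePoint N) :
    (lineF i f : Set (SegrePoint N)) = segreLine i f := by
  ext x; simp [mem_lineF, segreLine]

lemma eq_update_of_mem_lineF {N : ℕ} {i : Fin N} {f x : SegrePoint N}
    (hx : x ∈ lineF i f) : x = Function.update f i (x i) := by
  funext j
  by_cases hj : j = i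
  · subst hj; simp
  · rw [Function.update_of_ne hj]
    exact mem_lineF.1 hx j hj

lemma lineF_eq_image {N : ℕ} (i : Fin N) (f : SegrePoint N) :
    lineF i f = Finset.image (fun v => Function.update f i v) Finset.univ := by
  ext x
  simp only [Finset.mem_image, Finset.mem_univ, true_and]
  constructor
  · intro hx; exact ⟨x i, (eq_update_of_mem_lineF hx).symm⟩
  · rintro ⟨v, rfl⟩
    exact mem_lineF.2 fun j hj => Function.update_of_ne hj _ _

lemma card_lineF {N : ℕ} (i : Fin N) (f : SegrePoint N) : (lineF i f).card = 3 := by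
  rw [lineF_eq_image, Finset.card_image_of_injective _ (Function.update_injective f i)]
  simp

/-- The cap property: every line meets `C` in an even number of points. -/
def CapP {N : ℕ} (C : Finset (SegrePoint N)) : Prop :=
  ∀ (i : Fin N) (f : SegrePoint N), Even ((lineF i f ∩ C).card)

/-- A slice of a set of points of `S_(n+1)` by the value of the first coordinate. -/
def slice {n : ℕ} (C : Finset (SegrePoint (n + 1))) (v : Fin 3) : Finset (SegrePoint n) :=
  Finset.univ.filter fun y => Fin.cons v y ∈ C

lemma mem_slice {n : ℕ} {C : Finset (SegrePoint (n + 1))} {v : Fin 3} {y : SegrePoint n} :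
    y ∈ slice C v ↔ Fin.cons v y ∈ C := by simp [slice]

lemma cons_injective {n : ℕ} (v : Fin 3) :
    Function.Injective (fun y : SegrePoint n => (Fin.cons v y : SegrePoint (n + 1))) := by
  intro y y' h
  funext k
  have := congrFun h k.succ
  simpa using this

/-- Embedding by prepending a fixed first coordinate. -/
def consEmb {n : ℕ} (v : Fin 3) : SegrePoint n ↪ SegrePoint (n + 1) :=
  ⟨fun y => Fin.cons v y, cons_injective v⟩

lemma mem_C_iff {n : ℕ} {C : Finset (SegrePoint (n + 1))} {x : SegrePoint (n + 1)} :
    x ∈ C ↔ Fin.tail x ∈ slice C (x 0) := by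
  rw [mem_slice, Fin.cons_self_tail]

lemma slice_line_eq {n : ℕ} (C : Finset (SegrePoint (n + 1))) (v : Fin 3)
    (i : Fin n) (g : SegrePoint n) :
    lineF i.succ (Fin.cons v g) ∩ C = (lineF i g ∩ slice C v).map (consEmb v) := by
  ext x
  simp only [Finset.mem_map, Finset.mem_inter, mem_lineF, mem_slice, consEmb,
    Function.Embedding.coeFn_mk]
  constructor
  · rintro ⟨hline, hC⟩
    have hx0 : x 0 = v := by
      have := hline 0 (Ne.symm (Fin.succ_ne_zero i))
      simpa using this
    refine ⟨Fin.tail x, ⟨⟨fun j hj => ?_, ?_⟩, ?_⟩⟩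
    · have := hline j.succ (fun h => hj (Fin.succ_injective _ h))
      simpa [Fin.tail] using this
    · rwa [← hx0, Fin.cons_self_tail]
    · rw [← hx0, Fin.cons_self_tail]
  · rintro ⟨y, ⟨⟨hline, hC⟩, rfl⟩⟩
    refine ⟨fun j => ?_, hC⟩
    refine Fin.cases ?_ (fun k => ?_) j
    · intro _; simp
    · intro hk
      have hki : k ≠ i := fun h => hk (by rw [h])
      simpa using hline k hki

lemma slice_capP {n : ℕ} {C : Finset (SegrePoint (n + 1))} (hC : CapP C) (v : Fin 3) :
    CapP (slice C v) := by
  intro i g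
  have h := hC i.succ (Fin.cons v g)
  rwa [slice_line_eq, Finset.card_map] at h

lemma point_line_eq {n : ℕ} (C : Finset (SegrePoint (n + 1))) (y : SegrePoint n) :
    lineF 0 (Fin.cons 0 y) ∩ C =
      (Finset.univ.filter fun v => y ∈ slice C v).map
        ⟨fun v => Fin.cons v y, fun v w h => by simpa using congrFun h 0⟩ := by
  ext x
  simp only [Finset.mem_map, Finset.mem_inter, mem_lineF, Finset.mem_filter,
    Finset.mem_univ, true_and, mem_slice, Function.Embedding.coeFn_mk]
  constructor
  · rintro ⟨hline, hC⟩
    have hx : x = Fin.cons (x 0) y := by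
      funext j
      refine Fin.cases ?_ (fun k => ?_) j
      · simp
      · have := hline k.succ (Fin.succ_ne_zero k)
        simpa [Fin.tail] using this
    exact ⟨x 0, by rwa [← hx], hx.symm⟩
  · rintro ⟨v, hv, rfl⟩
    refine ⟨fun j => ?_, hv⟩
    refine Fin.cases ?_ (fun k => ?_) j
    · intro h; exact absurd rfl h
    · intro _; show (Fin.cons v y : SegrePoint (n + 1)) k.succ = y k; simp

lemma even_point_count {n : ℕ} {C : Finset (SegrePoint (n + 1))} (hC : CapP C)
    (y : SegrePoint n) :
    Even ((Finset.univ.filter fun v => y ∈ slice C v).card) := by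
  have h := hC 0 (Fin.cons 0 y)
  rwa [point_line_eq, Finset.card_map] at h

lemma exists_other_slice {n : ℕ} {C : Finset (SegrePoint (n + 1))} (hC : CapP C)
    {y : SegrePoint n} {v : Fin 3} (hy : y ∈ slice C v) :
    ∃ w, w ≠ v ∧ y ∈ slice C w := by
  by_contra hcon
  push_neg at hcon
  have hF : (Finset.univ.filter fun w => y ∈ slice C w) = {v} := by
    apply Finset.eq_singleton_iff_unique_mem.2
    refine ⟨by simp [hy], fun w hw => ?_⟩
    simp only [Finset.mem_filter, Finset.mem_univ, true_and] at hw
    by_contra hwv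
    exact hcon w hwv hw
  have := even_point_count hC y
  rw [hF] at this
  simp at this

lemma card_slice_sum {n : ℕ} (C : Finset (SegrePoint (n + 1))) :
    C.card = ∑ v : Fin 3, (slice C v).card := by
  have h : C.card = ∑ v : Fin 3, (C.filter fun x => x 0 = v).card :=
    Finset.card_eq_sum_card_fiberwise fun x _ => Finset.mem_univ (x 0)
  rw [h]
  refine Finset.sum_congr rfl fun v _ => ?_
  have : C.filter (fun x => x 0 = v) = (slice C v).map (consEmb v) := by
    ext x
    simp only [Finset.mem_filter, Finset.mem_map, mem_slice, consEmb,
      Function.Embedding.coeFn_mk]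
    constructor
    · rintro ⟨hC, hx0⟩
      exact ⟨Fin.tail x, by rwa [← hx0, Fin.cons_self_tail], by rw [← hx0, Fin.cons_self_tail]⟩
    · rintro ⟨y, hy, rfl⟩
      exact ⟨hy, by simp⟩
  rw [this, Finset.card_map]

theorem cap_main : ∀ (N : ℕ) (C : Finset (SegrePoint N)), CapP C → C.Nonempty →
    2 ^ N ≤ C.card ∧
      (C.card = 2 ^ N → ∃ p : SegrePoint N, C = Finset.univ.filter fun x => ∀ j, x j ≠ p j) := by
  intro N
  induction N with
  | zero =>
    intro C hC hne
    have h1 : 1 ≤ C.card := Finset.card_pos.2 hne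
    refine ⟨by simpa using h1, fun hcard => ⟨fun j => Fin.elim0 j, ?_⟩⟩
    have huniv : C = Finset.univ := by
      apply Finset.eq_univ_of_card
      rw [hcard]
      simp
    rw [huniv]
    ext x
    simp only [Finset.mem_filter, Finset.mem_univ, true_and, true_iff]
    exact fun j => Fin.elim0 j
  | succ n ih =>
    intro C hC hne
    by_cases hall : ∀ v : Fin 3, (slice C v).Nonempty
    · have hge : ∀ v : Fin 3, 2 ^ n ≤ (slice C v).card :=
        fun v => (ih (slice C v) (slice_capP hC v) (hall v)).1
      have hsum := card_slice_sum C
      have h3 : 3 * 2 ^ n ≤ C.card := by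
        rw [hsum, Fin.sum_univ_three]
        have := hge 0; have := hge 1; have := hge 2
        omega
      have hpow : 0 < 2 ^ n := Nat.pow_pos (by norm_num)
      constructor
      · calc 2 ^ (n + 1) = 2 * 2 ^ n := by ring
        _ ≤ 3 * 2 ^ n := by omega
        _ ≤ C.card := h3
      · intro hcard
        rw [hcard] at h3
        have : 2 ^ (n + 1) = 2 * 2 ^ n := by ring
        omega
    · push_neg at hall
      obtain ⟨a, ha⟩ := hall
      have ha' : slice C a = ∅ := ha
      obtain ⟨x, hx⟩ := hne
      set b := x 0 with hb_def
      have hb : (slice C b).Nonempty := ⟨Fin.tail x, mem_C_iff.1 hx⟩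
      have hba : b ≠ a := by
        rintro rfl
        rw [ha'] at hb
        exact Finset.not_nonempty_empty hb
      have htri : ∀ (a b : Fin 3), a ≠ b → ∃ c, c ≠ a ∧ c ≠ b ∧ ∀ v : Fin 3,
          v = a ∨ v = b ∨ v = c := by decide
      obtain ⟨c, hca, hcb, hcover⟩ := htri a b hba.symm
      -- slice C b = slice C c
      have hkey : ∀ v w : Fin 3, v ≠ a → w ≠ a → v ≠ w →
          slice C v ⊆ slice C w := by
        intro v w hva hwa hvw y hy
        obtain ⟨w', hw'v, hw'⟩ := exists_other_slice hC hy
        have hw'a : w' ≠ a := by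
          rintro rfl
          rw [ha'] at hw'
          exact absurd hw' (Finset.notMem_empty _)
        rcases hcover v with rfl | hvb | hvc
        · exact absurd rfl hva
        · rcases hcover w with rfl | hwb | hwc
          · exact absurd rfl hwa
          · exact absurd (hvb.trans hwb.symm) hvw
          · rcases hcover w' with rfl | hw'b | hw'c
            · exact absurd rfl hw'a
            · exact absurd (hw'b.trans hvb.symm) hw'v
            · rw [hwc, ← hw'c]; exact hw'
        · rcases hcover w with rfl | hwb | hwc
          · exact absurd rfl hwa
          · rcases hcover w' with rfl | hw'b | hw'c
            · exact absurd rfl hw'a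
            · rw [hwb, ← hw'b]; exact hw'
            · exact absurd (hw'c.trans hvc.symm) hw'v
          · exact absurd (hvc.trans hwc.symm) hvw
      have hbc : slice C b = slice C c :=
        Finset.Subset.antisymm (hkey b c hba hca (fun h => hcb h.symm))
          (hkey c b hca hba hcb)
      have huniv : (Finset.univ : Finset (Fin 3)) = {a, b, c} := by
        ext v
        simp only [Finset.mem_univ, Finset.mem_insert, Finset.mem_singleton, true_iff]
        exact hcover v
      have hab : a ≠ b := hba.symm
      have hsum : C.card = 2 * (slice C b).card := by
        rw [card_slice_sum C, huniv]
        rw [Finset.sum_insert (by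
          simp only [Finset.mem_insert, Finset.mem_singleton]
          push_neg
          exact ⟨hab, fun h => hca h.symm⟩)]
        rw [Finset.sum_insert (by
          simp only [Finset.mem_singleton]
          exact fun h => hcb h.symm)]
        rw [Finset.sum_singleton, ha', ← hbc]
        simp
        ring
      have ihb := ih (slice C b) (slice_capP hC b) hb
      constructor
      · calc 2 ^ (n + 1) = 2 * 2 ^ n := by ring
        _ ≤ 2 * (slice C b).card := by
            have := ihb.1
            omega
        _ = C.card := hsum.symm
      · intro hcard
        have hcardb : (slice C b).card = 2 ^ n := by
          have : 2 ^ (n + 1) = 2 * 2 ^ n := by ring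
          omega
        obtain ⟨p', hp'⟩ := ihb.2 hcardb
        refine ⟨Fin.cons a p', ?_⟩
        ext z
        simp only [Finset.mem_filter, Finset.mem_univ, true_and]
        rw [mem_C_iff]
        have hmemb : ∀ y : SegrePoint n, y ∈ slice C b ↔ ∀ k, y k ≠ p' k := by
          intro y; rw [hp']; simp
        constructor
        · intro hz j
          have hz0a : z 0 ≠ a := by
            intro h
            rw [h, ha'] at hz
            exact absurd hz (Finset.notMem_empty _)
          have hzb : Fin.tail z ∈ slice C b := by
            rcases hcover (z 0) with h0 | h0 | h0
            · exact absurd h0 hz0a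
            · rwa [h0] at hz
            · rw [hbc, ← h0]; exact hz
          refine Fin.cases ?_ (fun k => ?_) j
          · simpa using hz0a
          · have := (hmemb _).1 hzb k
            simpa [Fin.tail] using this
        · intro hz
          have hz0a : z 0 ≠ a := by simpa using hz 0
          have hzb : Fin.tail z ∈ slice C b := by
            apply (hmemb _).2
            intro k
            have := hz k.succ
            simpa [Fin.tail] using this
          rcases hcover (z 0) with h0 | h0 | h0
          · exact absurd h0 hz0a
          · rwa [h0]
          · rw [h0, ← hbc]; exact hzb

lemma hamming_le_three_iff (x p : SegrePoint 4) :
    hammingDist x p ≤ 3 ↔ ¬ ∀ j, x j ≠ p j := by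
  have hdef : hammingDist x p = (Finset.univ.filter fun j => x j ≠ p j).card := rfl
  constructor
  · intro h hall
    rw [hdef, Finset.filter_true_of_mem fun j _ => hall j] at h
    simp at h
  · intro h
    push_neg at h
    obtain ⟨j, hj⟩ := h
    have hsub : (Finset.univ.filter fun j => x j ≠ p j) ⊆ Finset.univ.erase j := by
      intro k hk
      simp only [Finset.mem_filter, Finset.mem_univ, true_and] at hk
      refine Finset.mem_erase.2 ⟨fun h => ?_, Finset.mem_univ k⟩
      subst h; exact hk hj
    have := Finset.card_le_card hsub
    rw [Finset.card_erase_of_mem (Finset.mem_univ j)] at this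
    simp only [Finset.card_univ, Fintype.card_fin] at this
    omega

/-- The candidate hyperplane attached to a point `p`. -/
def Hset (p : SegrePoint 4) : Set (SegrePoint 4) := {x | hammingDist x p ≤ 3}

lemma mem_Hset_iff {x p : SegrePoint 4} : x ∈ Hset p ↔ ¬ ∀ j, x j ≠ p j :=
  hamming_le_three_iff x p

lemma add_one_ne (v : Fin 3) : v + 1 ≠ v := by revert v; decide

lemma card_SegrePoint : Fintype.card (SegrePoint 4) = 81 := by
  rw [Fintype.card_fun]
  simp

lemma Hset_eq_coe (p : SegrePoint 4) :
    Hset p = ↑((Fintype.piFinset fun j => ({p j}ᶜ : Finset (Fin 3)))ᶜ) := by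
  ext x
  simp only [Finset.coe_compl, Set.mem_compl_iff, Finset.mem_coe, Fintype.mem_piFinset,
    Finset.mem_compl, Finset.mem_singleton, mem_Hset_iff]

lemma ncard_Hset (p : SegrePoint 4) : (Hset p).ncard = 65 := by
  rw [Hset_eq_coe, Set.ncard_coe_finset, Finset.card_compl, Fintype.card_piFinset,
    card_SegrePoint]
  have : ∀ j : Fin 4, ({p j}ᶜ : Finset (Fin 3)).card = 2 := by
    intro j
    rw [Finset.card_compl, Finset.card_singleton]
    simp
  rw [Finset.prod_congr rfl fun j _ => this j]
  simp

lemma isHyp_Hset (p : SegrePoint 4) : IsGeomHyperplane (Hset p) := by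
  constructor
  · intro h
    have : (fun j => p j + 1 : SegrePoint 4) ∈ Hset p := h ▸ Set.mem_univ _
    exact mem_Hset_iff.1 this fun j => add_one_ne (p j)
  · intro i f
    by_cases hf : ∃ j, j ≠ i ∧ f j = p j
    · left
      obtain ⟨j, hji, hfj⟩ := hf
      intro x hx
      refine mem_Hset_iff.2 fun hall => hall j ?_
      rw [hx j hji, hfj]
    · right
      push_neg at hf
      have hkey : segreLine i f ∩ Hset p = {Function.update f i (p i)} := by
        ext x
        simp only [Set.mem_inter_iff, Set.mem_singleton_iff]
        constructor
        · rintro ⟨hline, hH⟩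
          have := mem_Hset_iff.1 hH
          push_neg at this
          obtain ⟨j, hj⟩ := this
          have hji : j = i := by
            by_contra hne
            exact hf j hne (by rw [← hline j hne]; exact hj)
          subst hji
          funext k
          by_cases hk : k = j
          · subst hk; simp [hj]
          · rw [Function.update_of_ne hk]
            exact hline k hk
        · rintro rfl
          refine ⟨fun j hj => Function.update_of_ne hj _ _, mem_Hset_iff.2 fun hall => ?_⟩
          exact hall i (by simp)
      rw [hkey, Set.ncard_singleton]

lemma Hset_inj : Function.Injective Hset := by
  intro p q h
  by_contra hpq
  obtain ⟨j0, hj0⟩ := Function.ne_iff.1 hpq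
  set x : SegrePoint 4 := fun k => if k = j0 then q j0 else p k + 1 with hxdef
  have hxq : x ∈ Hset q := mem_Hset_iff.2 fun hall => hall j0 (by simp [hxdef])
  rw [← h] at hxq
  have := mem_Hset_iff.1 hxq
  push_neg at this
  obtain ⟨k, hk⟩ := this
  by_cases hkj : k = j0
  · subst hkj
    rw [hxdef] at hk
    simp only [if_pos rfl] at hk
    exact hj0 hk.symm
  · rw [hxdef] at hk
    simp only [if_neg hkj] at hk
    exact add_one_ne (p k) hk

lemma hyp_eq_Hset {H : Set (SegrePoint 4)} (h1 : IsGeomHyperplane H) (h2 : H.ncard = 65) :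
    ∃ p, H = Hset p := by
  have hfin : H.Finite := Set.toFinite H
  set HF := hfin.toFinset with hHFdef
  have hmem : ∀ x, x ∈ HF ↔ x ∈ H := fun x => Set.Finite.mem_toFinset _
  have hcoe : (HF : Set (SegrePoint 4)) = H := Set.Finite.coe_toFinset _
  have hcardHF : HF.card = 65 := by
    rw [← h2, Set.ncard_eq_toFinset_card _ hfin]
  have hcap : CapP HFᶜ := by
    intro i f
    rcases h1.2 i f with hsub | hone
    · have hd : lineF i f \ HF = ∅ := by
        rw [Finset.sdiff_eq_empty_iff_subset]
        intro x hx
        rw [hmem]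
        exact hsub (by rw [← coe_lineF]; exact hx)
      have hiff : lineF i f ∩ HFᶜ = lineF i f \ HF := by ext y; simp
      rw [hiff, hd]
      simp
    · have hco : ((lineF i f ∩ HF : Finset (SegrePoint 4)) : Set (SegrePoint 4)) =
          segreLine i f ∩ H := by
        rw [Finset.coe_inter, coe_lineF, hcoe]
      have hcard1 : (lineF i f ∩ HF).card = 1 := by
        have h' := (Set.ncard_coe_finset (lineF i f ∩ HF)).symm
        rw [hco, hone] at h'
        exact h' 
      have hs3 := Finset.card_inter_add_card_sdiff (lineF i f) HF
      rw [card_lineF, hcard1] at hs3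
      have hiff : lineF i f ∩ HFᶜ = lineF i f \ HF := by ext y; simp
      rw [hiff]
      have h2' : (lineF i f \ HF).card = 2 := by omega
      rw [h2']
      exact ⟨1, rfl⟩
  have hcardC : (HFᶜ).card = 16 := by
    rw [Finset.card_compl, hcardHF, card_SegrePoint]
  have hne : (HFᶜ).Nonempty := Finset.card_pos.1 (by rw [hcardC]; norm_num)
  obtain ⟨p, hp⟩ := (cap_main 4 HFᶜ hcap hne).2 (by rw [hcardC]; norm_num)
  refine ⟨p, ?_⟩
  ext x
  rw [← hmem, mem_Hset_iff]
  have : x ∈ HFᶜ ↔ ∀ j, x j ≠ p j := by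
    rw [hp]; simp
  rw [← this]
  simp [Finset.mem_compl]

end SegreAux

theorem segre4_singular_hyperplanes :
    (∀ p : SegrePoint 4,
      IsGeomHyperplane {x : SegrePoint 4 | hammingDist x p ≤ 3} ∧
      {x : SegrePoint 4 | hammingDist x p ≤ 3}.ncard = 65) ∧
    {H : Set (SegrePoint 4) | IsGeomHyperplane H ∧ H.ncard = 65}.ncard = 81 ∧
    (∀ H : Set (SegrePoint 4), IsGeomHyperplane H → H.ncard = 65 →
      ∃! p : SegrePoint 4, H = {x : SegrePoint 4 | hammingDist x p ≤ 3}) := by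
  classical
  refine ⟨fun p => ⟨SegreAux.isHyp_Hset p, SegreAux.ncard_Hset p⟩, ?_, fun H h1 h2 => ?_⟩
  · have hrange : {H : Set (SegrePoint 4) | IsGeomHyperplane H ∧ H.ncard = 65} =
        Set.range SegreAux.Hset := by
      ext H
      constructor
      · rintro ⟨h1, h2⟩
        obtain ⟨p, hp⟩ := SegreAux.hyp_eq_Hset h1 h2
        exact ⟨p, hp.symm⟩
      · rintro ⟨p, rfl⟩
        exact ⟨SegreAux.isHyp_Hset p, SegreAux.ncard_Hset p⟩
    rw [hrange]
    have : Set.range SegreAux.Hset = ↑(Finset.univ.image SegreAux.Hset) := by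
      rw [Finset.coe_image, Finset.coe_univ, Set.image_univ]
    rw [this, Set.ncard_coe_finset,
      Finset.card_image_of_injective _ SegreAux.Hset_inj, Finset.card_univ,
      SegreAux.card_SegrePoint]
  · obtain ⟨p, hp⟩ := SegreAux.hyp_eq_Hset h1 h2
    exact ⟨p, hp, fun q hq => SegreAux.Hset_inj (hq.symm.trans hp)⟩
end

section
/- Let p and q be points of the binary Segre variety S_(4) at Hamming distance d, where d ∈ {2, 3, 4}, and for a point x let H_x denote the singular hyperplane at x, i.e., the set of points at Hamming distance at most 3 from x. Then the complement of the symmetric difference H_p Δ H_q is a geometric hyperplane of S_(4) with exactly 57 points if d = 2, exactly 53 points if d = 3, and exactly 51 points if d = 4. -/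
open scoped symmDiff

/- ### Auxiliary development -/

def Hs (p q : SegrePoint 4) : Set (SegrePoint 4) :=
  {x | hammingDist x p ≤ 3 ↔ hammingDist x q ≤ 3}

instance (p q : SegrePoint 4) : DecidablePred (· ∈ Hs p q) := fun _ =>
  inferInstanceAs (Decidable (_ ↔ _))

lemma Hs_eq (p q : SegrePoint 4) :
    (({x : SegrePoint 4 | hammingDist x p ≤ 3} ∆
      {x : SegrePoint 4 | hammingDist x q ≤ 3})ᶜ) = Hs p q := by
  ext x
  simp only [Set.mem_compl_iff, Set.mem_symmDiff, Set.mem_setOf_eq, Hs]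
  tauto

lemma hd_sub (x y t : SegrePoint 4) : hammingDist (x - t) (y - t) = hammingDist x y := by
  simp [hammingDist]

lemma line_eq (i : Fin 4) (f : SegrePoint 4) :
    segreLine i f = (↑({Function.update f i 0, Function.update f i 1,
      Function.update f i 2} : Finset (SegrePoint 4)) : Set (SegrePoint 4)) := by
  ext x
  simp only [Finset.coe_insert, Set.mem_insert_iff, Finset.coe_singleton,
    Set.mem_singleton_iff, segreLine, Set.mem_setOf_eq]
  constructor
  · intro h
    have hx : x = Function.update f i (x i) := by
      funext j
      rcases eq_or_ne j i with rfl | hj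
      · simp
      · simp [Function.update_of_ne hj, h j hj]
    have hv : ∀ v : Fin 3, v = 0 ∨ v = 1 ∨ v = 2 := by decide
    rcases hv (x i) with h0 | h0 | h0 <;> rw [h0] at hx
    · exact Or.inl hx
    · exact Or.inr (Or.inl hx)
    · exact Or.inr (Or.inr hx)
  · intro h j hj
    rcases h with rfl | rfl | rfl <;> simp [Function.update_of_ne hj]

def goodB (H : Set (SegrePoint 4)) [DecidablePred (· ∈ H)] : Prop :=
  (¬ ∀ x, x ∈ H) ∧ ∀ (i : Fin 4) (f : SegrePoint 4),
    (∀ v : Fin 3, Function.update f i v ∈ H) ∨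
    (({Function.update f i 0, Function.update f i 1, Function.update f i 2} :
        Finset (SegrePoint 4)).filter (· ∈ H)).card = 1

instance (H : Set (SegrePoint 4)) [DecidablePred (· ∈ H)] : Decidable (goodB H) :=
  inferInstanceAs (Decidable (_ ∧ _))

lemma goodB_imp (H : Set (SegrePoint 4)) [DecidablePred (· ∈ H)] (h : goodB H) :
    IsGeomHyperplane H := by
  obtain ⟨h1, h2⟩ := h
  constructor
  · intro hU
    exact h1 (fun x => hU ▸ Set.mem_univ x)
  · intro i f
    rcases h2 i f with h | h
    · left
      rw [line_eq]
      intro x hx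
      simp only [Finset.coe_insert, Set.mem_insert_iff, Finset.coe_singleton,
        Set.mem_singleton_iff] at hx
      rcases hx with rfl | rfl | rfl
      · exact h 0
      · exact h 1
      · exact h 2
    · right
      have : segreLine i f ∩ H =
          (↑(({Function.update f i 0, Function.update f i 1, Function.update f i 2} :
            Finset (SegrePoint 4)).filter (· ∈ H)) : Set (SegrePoint 4)) := by
        rw [line_eq]
        ext x
        simp [and_comm]
      rw [this, Set.ncard_coe_finset, h]

lemma ncard_Hs (p q : SegrePoint 4) :
    (Hs p q).ncard = (Finset.univ.filter (· ∈ Hs p q)).card := by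
  rw [Set.ncard_eq_toFinset_card']
  congr 1
  ext x
  simp [Set.mem_toFinset]

/-- Transfer of the properties along a point-equivalence preserving lines. -/
lemma transfer (e : SegrePoint 4 ≃ SegrePoint 4)
    (hl : ∀ (i : Fin 4) (f : SegrePoint 4), ∃ g, e '' segreLine i f = segreLine i g)
    (H : Set (SegrePoint 4)) (hH : IsGeomHyperplane H) :
    IsGeomHyperplane (e ⁻¹' H) := by
  obtain ⟨h1, h2⟩ := hH
  have hpre : ∀ S : Set (SegrePoint 4), e ⁻¹' S = e.symm '' S := by
    intro S
    rw [Equiv.image_eq_preimage_symm]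
    simp
  constructor
  · intro hU
    apply h1
    rw [Set.eq_univ_iff_forall]
    intro x
    have : e.symm x ∈ e ⁻¹' H := hU ▸ Set.mem_univ _
    simpa using this
  · intro i f
    obtain ⟨g, hg⟩ := hl i f
    rcases h2 i g with h | h
    · left
      intro x hx
      have : e x ∈ segreLine i g := hg ▸ Set.mem_image_of_mem e hx
      exact h this
    · right
      have hint : segreLine i f ∩ e ⁻¹' H = e ⁻¹' (segreLine i g ∩ H) := by
        ext x
        simp only [Set.mem_inter_iff, Set.mem_preimage]
        constructor
        · rintro ⟨hx, hx'⟩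
          exact ⟨hg ▸ Set.mem_image_of_mem e hx, hx'⟩
        · rintro ⟨hx, hx'⟩
          refine ⟨?_, hx'⟩
          rw [← hg] at hx
          obtain ⟨y, hy, hxy⟩ := hx
          rwa [← e.injective hxy]
      rw [hint, hpre, Set.ncard_image_of_injective _ e.symm.injective, h]

lemma ncard_preimage (e : SegrePoint 4 ≃ SegrePoint 4) (S : Set (SegrePoint 4)) :
    (e ⁻¹' S).ncard = S.ncard := by
  have : e ⁻¹' S = e.symm '' S := by
    rw [Equiv.image_eq_preimage_symm]; simp
  rw [this, Set.ncard_image_of_injective _ e.symm.injective]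

/- ### Translation -/

lemma translate_lines (p : SegrePoint 4) (i : Fin 4) (f : SegrePoint 4) :
    (Equiv.subRight p : SegrePoint 4 ≃ SegrePoint 4) '' segreLine i f = segreLine i (f - p) := by
  ext x
  rw [Equiv.image_eq_preimage_symm]
  simp only [Set.mem_preimage, Equiv.subRight_symm_apply, segreLine, Set.mem_setOf_eq]
  constructor
  · intro h j hj
    have := h j hj
    simp only [Pi.add_apply] at this
    simp [Pi.sub_apply, eq_sub_iff_add_eq, this]
  · intro h j hj
    have := h j hj
    simp only [Pi.sub_apply, eq_sub_iff_add_eq] at this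
    simpa using this

lemma Hs_translate (p q : SegrePoint 4) :
    Hs p q = (Equiv.subRight p : SegrePoint 4 ≃ SegrePoint 4) ⁻¹' Hs 0 (q - p) := by
  ext x
  simp only [Set.mem_preimage, Equiv.subRight_apply, Hs, Set.mem_setOf_eq]
  have h1 : hammingDist (x - p) 0 = hammingDist x p := by
    rw [show (0 : SegrePoint 4) = p - p by simp, hd_sub]
  have h2 : hammingDist (x - p) (q - p) = hammingDist x q := hd_sub x q p
  rw [h1, h2]

/- ### Scaling -/

def scl (r : SegrePoint 4) : SegrePoint 4 := fun i => if r i = 2 then 2 else 1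

lemma scl_mul_self (r : SegrePoint 4) (i : Fin 4) : scl r i * scl r i = 1 := by
  have : ∀ a : Fin 3, (if a = 2 then (2 : Fin 3) else 1) * (if a = 2 then 2 else 1) = 1 := by
    decide
  exact this (r i)

def sclMap (r : SegrePoint 4) : SegrePoint 4 → SegrePoint 4 := fun x i => scl r i * x i

lemma sclMap_involutive (r : SegrePoint 4) : Function.Involutive (sclMap r) := by
  intro x
  funext i
  simp [sclMap, ← mul_assoc, scl_mul_self]

def sclEquiv (r : SegrePoint 4) : SegrePoint 4 ≃ SegrePoint 4 :=
  (sclMap_involutive r).toPerm _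

lemma hd_scl (r x y : SegrePoint 4) :
    hammingDist (sclMap r x) (sclMap r y) = hammingDist x y := by
  simp only [hammingDist]
  congr 1
  ext i
  simp only [Finset.mem_filter, Finset.mem_univ, true_and, sclMap]
  have : ∀ c a b : Fin 3, c * c = 1 → (c * a = c * b ↔ a = b) := by decide
  exact Finset.mem_filter.trans ⟨fun h => (not_congr (this _ _ _ (scl_mul_self r i))).1 h.2,
    fun h => ⟨Finset.mem_univ _, (not_congr (this _ _ _ (scl_mul_self r i))).2 h⟩⟩

lemma scl_lines (r : SegrePoint 4) (i : Fin 4) (f : SegrePoint 4) :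
    (sclEquiv r) '' segreLine i f = segreLine i (sclMap r f) := by
  have key : ∀ c a b : Fin 3, c * c = 1 → (c * a = b ↔ a = c * b) := by decide
  ext x
  constructor
  · rintro ⟨y, hy, rfl⟩
    intro j hj
    show scl r j * y j = scl r j * f j
    rw [hy j hj]
  · intro h
    refine ⟨sclMap r x, ?_, sclMap_involutive r x⟩
    intro j hj
    have := h j hj
    show scl r j * x j = f j
    rw [key _ _ _ (scl_mul_self r j)]
    exact this

lemma sclMap_zero (r : SegrePoint 4) : sclMap r 0 = 0 := by
  funext i; simp [sclMap]

lemma Hs_scl (r : SegrePoint 4) :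
    Hs 0 r = (sclEquiv r) ⁻¹' Hs 0 (sclMap r r) := by
  ext x
  simp only [Set.mem_preimage, Hs, Set.mem_setOf_eq]
  have h0 : hammingDist (sclEquiv r x) 0 = hammingDist x 0 := by
    show hammingDist (sclMap r x) 0 = hammingDist x 0
    conv_lhs => rw [← sclMap_zero r]
    exact hd_scl r x 0
  have h1 : hammingDist (sclEquiv r x) (sclMap r r) = hammingDist x r :=
    hd_scl r x r
  rw [h0, h1]

lemma sclMap_self_ne_two (r : SegrePoint 4) (i : Fin 4) : sclMap r r i ≠ 2 := by
  have : ∀ a : Fin 3, (if a = 2 then (2 : Fin 3) else 1) * a ≠ 2 := by decide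
  exact this (r i)

/- ### The finite verification -/

set_option maxRecDepth 100000 in
set_option maxHeartbeats 4000000 in
lemma keyd : ∀ r : SegrePoint 4, (∀ i, r i ≠ 2) →
    (hammingDist 0 r = 2 → goodB (Hs 0 r) ∧ (Finset.univ.filter (· ∈ Hs 0 r)).card = 57) ∧
    (hammingDist 0 r = 3 → goodB (Hs 0 r) ∧ (Finset.univ.filter (· ∈ Hs 0 r)).card = 53) ∧
    (hammingDist 0 r = 4 → goodB (Hs 0 r) ∧ (Finset.univ.filter (· ∈ Hs 0 r)).card = 51) := by
  decide

lemma hd_comm' (x y : SegrePoint 4) : hammingDist x y = hammingDist y x :=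
  hammingDist_comm x y

theorem segre4_veldkamp_sum_of_singular_hyperplanes :
    ∀ (p q : SegrePoint 4) (d : ℕ), d ∈ ({2, 3, 4} : Set ℕ) →
      hammingDist p q = d →
      IsGeomHyperplane
        (({x : SegrePoint 4 | hammingDist x p ≤ 3} ∆
          {x : SegrePoint 4 | hammingDist x q ≤ 3})ᶜ) ∧
      (({x : SegrePoint 4 | hammingDist x p ≤ 3} ∆
          {x : SegrePoint 4 | hammingDist x q ≤ 3})ᶜ).ncard =
        (if d = 2 then 57 else if d = 3 then 53 else 51) := by
  intro p q d hd hdist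
  rw [Hs_eq]
  set r := q - p with hr
  set r' := sclMap r r with hr'
  have hd0r : hammingDist 0 r = d := by
    rw [hr, show (0 : SegrePoint 4) = p - p by simp, hd_sub, hdist]
  have hd0r' : hammingDist 0 r' = d := by
    rw [hr', ← sclMap_zero r, hd_scl, hd0r]
  have hne2 : ∀ i, r' i ≠ 2 := sclMap_self_ne_two r
  have hdecomp : Hs p q =
      (Equiv.subRight p : SegrePoint 4 ≃ SegrePoint 4) ⁻¹' ((sclEquiv r) ⁻¹' Hs 0 r') := by
    rw [Hs_translate, Hs_scl]
  obtain ⟨k2, k3, k4⟩ := keyd r' hne2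
  have hmain : goodB (Hs 0 r') ∧
      (Finset.univ.filter (· ∈ Hs 0 r')).card =
        (if d = 2 then 57 else if d = 3 then 53 else 51) := by
    simp only [Set.mem_insert_iff, Set.mem_singleton_iff] at hd
    rcases hd with rfl | rfl | rfl
    · simpa using k2 hd0r'
    · simpa using k3 hd0r'
    · simpa using k4 hd0r'
  constructor
  · rw [hdecomp]
    apply transfer _ (fun i f => ⟨_, translate_lines p i f⟩)
    apply transfer _ (fun i f => ⟨_, scl_lines r i f⟩)
    exact goodB_imp _ hmain.1
  · rw [hdecomp, ncard_preimage, ncard_preimage, ncard_Hs, hmain.2]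
end
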